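/- arXiv:2306.03409 — 10 statements merged into one kernel-verified Lean document; each statement's English description precedes it below -/
import Mathlib

section
/- If a solution set P is sufficient (contains, for every λ in the unit simplex of R^k, a solution minimizing the scalarized objective λ·f) for a k-objective minimization problem with non-negative objective values, then P k-approximates every feasible solution: for every feasible z there exists x ∈ P with f_i(x) ≤ k · f_i(z) for all i = 1,...,k, provided f_i(z) > 0 for all i. -/
/-!
Weight the objectives by `λᵢ ∝ 1 / fᵢ(z)`. Then every term `λᵢ fᵢ(z)` equals `1 / c`, where
`c = ∑ⱼ 1 / fⱼ(z)`, so `λ·f(z) = k / c`. A minimizer `x ∈ P` of `λ·f` satisfies, by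
non-negativity of the other terms, `fᵢ(x) / (c fᵢ(z)) = λᵢ fᵢ(x) ≤ λ·f(x) ≤ λ·f(z) = k / c`,
that is `fᵢ(x) ≤ k fᵢ(z)`.
-/

open Finset

section

variable {ι : Type*} [Fintype ι]

noncomputable def normalizedInv (v : ι → ℝ) (i : ι) : ℝ :=
  (v i)⁻¹ / ∑ j, (v j)⁻¹

lemma normalizedInv_nonneg {v : ι → ℝ} (hv : ∀ i, 0 ≤ v i) (i : ι) :
    0 ≤ normalizedInv v i :=
  div_nonneg (inv_nonneg.mpr (hv i)) (sum_nonneg fun j _ => inv_nonneg.mpr (hv j))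

lemma sum_inv_pos {v : ι → ℝ} (hv : ∀ i, 0 < v i) (i : ι) : 0 < ∑ j, (v j)⁻¹ :=
  sum_pos (fun j _ => inv_pos.mpr (hv j)) ⟨i, mem_univ i⟩

lemma sum_normalizedInv [Nonempty ι] {v : ι → ℝ} (hv : ∀ i, 0 < v i) :
    ∑ i, normalizedInv v i = 1 := by
  obtain ⟨i⟩ := ‹Nonempty ι›
  simp only [normalizedInv]
  rw [← sum_div, div_self (sum_inv_pos hv i).ne']

lemma normalizedInv_mul_self {v : ι → ℝ} (hv : ∀ i, 0 < v i) (i : ι) :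
    normalizedInv v i * v i = (∑ j, (v j)⁻¹)⁻¹ := by
  rw [normalizedInv, div_mul_eq_mul_div, inv_mul_cancel₀ (hv i).ne', one_div]

lemma sum_normalizedInv_mul_self {v : ι → ℝ} (hv : ∀ i, 0 < v i) :
    ∑ i, normalizedInv v i * v i = Fintype.card ι * (∑ j, (v j)⁻¹)⁻¹ := by
  simp only [normalizedInv_mul_self hv, sum_const, card_univ, nsmul_eq_mul]

lemma le_card_mul_of_sum_normalizedInv_mul_le {v a : ι → ℝ} (hv : ∀ i, 0 < v i)
    (ha : ∀ i, 0 ≤ a i)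
    (h : ∑ i, normalizedInv v i * a i ≤ ∑ i, normalizedInv v i * v i) (i : ι) :
    a i ≤ Fintype.card ι * v i := by
  set c := ∑ j, (v j)⁻¹
  have hc : 0 < c := sum_inv_pos hv i
  have hterm : (v i)⁻¹ * a i / c ≤ Fintype.card ι / c :=
    calc (v i)⁻¹ * a i / c = normalizedInv v i * a i := by
          rw [normalizedInv, div_mul_eq_mul_div]
      _ ≤ ∑ j, normalizedInv v j * a j :=
          single_le_sum (fun j _ => mul_nonneg (normalizedInv_nonneg (fun j => (hv j).le) j)
            (ha j)) (mem_univ i)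
      _ ≤ ∑ j, normalizedInv v j * v j := h
      _ = Fintype.card ι / c := by rw [sum_normalizedInv_mul_self hv, div_eq_mul_inv]
  rw [div_le_div_iff_of_pos_right hc, inv_mul_le_iff₀ (hv i)] at hterm
  linarith

end

theorem sufficient_set_k_approximates_general
    {α : Type*} (k : ℕ) (hk : 1 ≤ k)
    (S : Finset α)
    (f : α → Fin k → ℝ)
    (hf : ∀ x ∈ S, ∀ i, 0 ≤ f x i)
    (P : Finset α) (hPS : P ⊆ S)
    (hsuff : ∀ lam : Fin k → ℝ, (∀ i, 0 ≤ lam i) → (∑ i, lam i) = 1 →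
      ∃ x ∈ P, ∀ y ∈ S, (∑ i, lam i * f x i) ≤ ∑ i, lam i * f y i)
    (z : α) (hz : z ∈ S) (hzpos : ∀ i, 0 < f z i) :
    ∃ x ∈ P, ∀ i, f x i ≤ (k : ℝ) * f z i := by
  have : Nonempty (Fin k) := ⟨⟨0, hk⟩⟩
  obtain ⟨x, hxP, hxmin⟩ := hsuff (normalizedInv (f z))
    (normalizedInv_nonneg fun i => (hzpos i).le) (sum_normalizedInv hzpos)
  refine ⟨x, hxP, fun i => ?_⟩
  simpa using le_card_mul_of_sum_normalizedInv_mul_le hzpos (hf x (hPS hxP)) (hxmin z hz) i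

/-- A sufficient solution set `P` (containing, for every trade-off `λ` in the
unit simplex, a minimizer of the scalarized objective `λ·f` over `S`) `k`-approximates
every feasible solution whose objective values are all positive. -/
theorem sufficient_set_k_approximates
    {α : Type*} (k : ℕ) (hk : 1 ≤ k)
    (S : Finset α) (hS : S.Nonempty)
    (f : α → Fin k → ℝ)
    (hf : ∀ x ∈ S, ∀ i, 0 ≤ f x i)
    (P : Finset α) (hPS : P ⊆ S)
    (hsuff : ∀ lam : Fin k → ℝ, (∀ i, 0 ≤ lam i) → (∑ i, lam i) = 1 →
      ∃ x ∈ P, ∀ y ∈ S, (∑ i, lam i * f x i) ≤ ∑ i, lam i * f y i)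
    (z : α) (hz : z ∈ S) (hzpos : ∀ i, 0 < f z i) :
    ∃ x ∈ P, ∀ i, f x i ≤ (k : ℝ) * f z i :=
  sufficient_set_k_approximates_general k hk S f hf P hPS hsuff z hz hzpos
end

section
/- For the k-objective instance over {0,1}^{k²} with objectives f_i(x) = (Σ_{j=0}^{k-1} x_{ik-j}) − ε·∏_{j=0}^{k-1} x_{ik-j} (for fixed ε ∈ (0,k)) and feasible set {x : |x| ≥ k}, the set S = {θ_1,...,θ_k}, where θ_i is the indicator of positions ik−k+1,...,ik, contains all supported solutions, yet S fails to (k−ε')-approximate the solution z = Σ_{i=0}^{k-1} e_{ik+1} for every ε' > ε. Hence the approximation factor k of a complete solution set is tight up to ε. -/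
open Finset

/-- The `i`-th block of `k` positions in `Fin (k*k)`: positions `i*k, i*k+1, ..., i*k+k-1`
(0-indexed version of positions `ik-k+1,...,ik`). -/
def block (k : ℕ) (i : Fin k) : Finset (Fin (k * k)) :=
  Finset.univ.filter (fun e => i.val * k ≤ e.val ∧ e.val < i.val * k + k)

/-- The objective `f i x = |x ∩ B_i| - ε·[B_i ⊆ x]`. -/
noncomputable def objF (k : ℕ) (ε : ℝ) (i : Fin k) (x : Finset (Fin (k * k))) : ℝ :=
  ((x ∩ block k i).card : ℝ) - ε * (if block k i ⊆ x then 1 else 0)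

lemma mem_block {k : ℕ} {i : Fin k} {e : Fin (k * k)} :
    e ∈ block k i ↔ i.val * k ≤ e.val ∧ e.val < i.val * k + k := by
  simp [block]

lemma card_block {k : ℕ} (hk0 : 0 < k) (i : Fin k) : (block k i).card = k := by
  have hbound : i.val * k + k ≤ k * k := by
    have h1 : (i.val + 1) * k ≤ k * k := Nat.mul_le_mul_right k i.isLt
    nlinarith [h1]
  set f : Fin k → Fin (k*k) := fun a => ⟨i.val * k + a.val, by have := a.isLt; omega⟩ with hf
  have hinj : Function.Injective f := by
    intro a b hab
    apply Fin.ext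
    have : i.val * k + a.val = i.val * k + b.val := congrArg Fin.val hab
    omega
  have himg : block k i = Finset.image f Finset.univ := by
    ext e
    simp only [mem_block, Finset.mem_image, Finset.mem_univ, true_and, hf]
    constructor
    · rintro ⟨h1, h2⟩
      exact ⟨⟨e.val - i.val * k, by omega⟩, Fin.ext (by simp; omega)⟩
    · rintro ⟨a, rfl⟩
      have := a.isLt
      simp
  rw [himg, Finset.card_image_of_injective _ hinj, Finset.card_univ, Fintype.card_fin]

lemma block_disjoint {k : ℕ} {i j : Fin k} (h : i ≠ j) {e : Fin (k*k)}
    (hi : e ∈ block k i) (hj : e ∈ block k j) : False := by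
  rw [mem_block] at hi hj
  rcases lt_trichotomy i.val j.val with hlt | heq | hgt
  · have : (i.val + 1) * k ≤ j.val * k := Nat.mul_le_mul_right k hlt
    nlinarith [this, hi.2, hj.1]
  · exact h (Fin.ext heq)
  · have : (j.val + 1) * k ≤ i.val * k := Nat.mul_le_mul_right k hgt
    nlinarith [this, hj.2, hi.1]

lemma inter_block_eq_filter {k : ℕ} (hk0 : 0 < k) (x : Finset (Fin (k*k))) (i : Fin k) :
    x ∩ block k i = x.filter (fun e => (⟨e.val / k, by
      have := e.isLt; exact Nat.div_lt_of_lt_mul (by omega)⟩ : Fin k) = i) := by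
  ext e
  simp only [Finset.mem_inter, Finset.mem_filter, mem_block, Fin.ext_iff]
  constructor
  · rintro ⟨hx, h1, h2⟩
    exact ⟨hx, Nat.div_eq_of_lt_le h1 (by rw [Nat.succ_mul]; exact h2)⟩
  · rintro ⟨hx, h⟩
    have h1 : e.val / k = i.val := h
    have h2 : i.val * k + e.val % k = e.val := by
      rw [← h1, Nat.mul_comm]; exact Nat.div_add_mod e.val k
    have h3 := Nat.mod_lt e.val hk0
    exact ⟨hx, by linarith [Nat.zero_le (e.val % k)], by linarith⟩

lemma sum_card_inter {k : ℕ} (hk0 : 0 < k) (x : Finset (Fin (k*k))) :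
    ∑ i : Fin k, (x ∩ block k i).card = x.card := by
  rw [Finset.card_eq_sum_card_fiberwise (f := fun e : Fin (k*k) => (⟨e.val / k, by
      have := e.isLt; exact Nat.div_lt_of_lt_mul (by omega)⟩ : Fin k)) (t := Finset.univ)
      (fun e _ => Finset.mem_univ _)]
  apply Finset.sum_congr rfl
  intro i _
  rw [inter_block_eq_filter hk0]

lemma block_subset_card {k : ℕ} (hk0 : 0 < k) {x : Finset (Fin (k*k))} {i : Fin k}
    (h : block k i ⊆ x) : (x ∩ block k i).card = k := by
  rw [Finset.inter_eq_right.mpr h, card_block hk0]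

lemma objF_block_self {k : ℕ} (hk0 : 0 < k) (ε : ℝ) (i : Fin k) :
    objF k ε i (block k i) = k - ε := by
  simp [objF, Finset.inter_self, card_block hk0]

lemma objF_block_ne {k : ℕ} (ε : ℝ) {i j : Fin k} (h : i ≠ j) :
    objF k ε j (block k i) = 0 := by
  have h1 : block k i ∩ block k j = ∅ := by
    ext e; simp only [Finset.mem_inter, Finset.notMem_empty, iff_false]
    rintro ⟨hi, hj⟩; exact block_disjoint h hi hj
  have h2 : ¬ block k j ⊆ block k i := by
    intro hsub
    have hk0 : 0 < k := j.pos
    have hmem : (⟨j.val * k, by nlinarith [Nat.mul_le_mul_right k j.isLt]⟩ : Fin (k*k)) ∈ block k j := by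
      rw [mem_block]; simp; omega
    exact block_disjoint h (hsub hmem) hmem
  simp [objF, h1, h2]

lemma mul_succ_le {k a b : ℕ} (h : a < b) : a * k + k ≤ b * k := by
  have := Nat.mul_le_mul_right k (show a + 1 ≤ b by omega)
  rwa [Nat.succ_mul] at this

lemma objF_z {k : ℕ} (hk : 2 ≤ k) (ε : ℝ) (j : Fin k) :
    objF k ε j (Finset.univ.filter (fun e : Fin (k*k) => ∃ i : Fin k, e.val = i.val * k)) = 1 := by
  have hk0 : 0 < k := by omega
  set z : Finset (Fin (k*k)) :=
    Finset.univ.filter (fun e : Fin (k*k) => ∃ i : Fin k, e.val = i.val * k) with hzdef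
  have hjk : j.val * k + k ≤ k * k := by
    have := Nat.mul_le_mul_right k j.isLt
    rwa [Nat.succ_mul] at this
  have hz1 : z ∩ block k j = {(⟨j.val * k, by linarith⟩ : Fin (k*k))} := by
    ext e
    simp only [hzdef, Finset.mem_inter, Finset.mem_filter, Finset.mem_univ, true_and,
      mem_block, Finset.mem_singleton, Fin.ext_iff]
    constructor
    · rintro ⟨⟨i, hi⟩, h1, h2⟩
      rcases lt_trichotomy i.val j.val with hlt | heq | hgt
      · have := mul_succ_le (k := k) hlt
        linarith
      · rw [hi, heq]
      · have := mul_succ_le (k := k) hgt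
        linarith
    · intro h
      refine ⟨⟨j, h⟩, by rw [h], by rw [h]; linarith⟩
  have hnsub : ¬ block k j ⊆ z := by
    intro hsub
    have hw : (⟨j.val * k + 1, by linarith⟩ : Fin (k*k)) ∈ block k j := by
      rw [mem_block]; constructor
      · simp
      · simp; linarith
    have := hsub hw
    rw [hzdef, Finset.mem_filter] at this
    obtain ⟨-, i, hi⟩ := this
    simp only at hi
    rcases lt_trichotomy i.val j.val with hlt | heq | hgt
    · have := mul_succ_le (k := k) hlt
      linarith
    · rw [heq] at hi; omega
    · have := mul_succ_le (k := k) hgt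
      linarith
  simp [objF, hz1, hnsub]

/-- in the instance over `{0,1}^{k²}` with objectives
`f_i(x) = |x ∩ B_i| − ε·∏_{e ∈ B_i} x_e` and feasible set `{x : |x| ≥ k}`, the set
`S = {θ_1, ..., θ_k}` (where `θ_i` is the indicator of the `i`-th block) contains all
supported solutions, yet fails to `(k−ε')`-approximate `z = Σ_i e_{ik+1}` for every
`ε' > ε`. -/
theorem complete_set_k_approx_tight
    (k : ℕ) (hk : 2 ≤ k) (ε : ℝ) (hε : 0 < ε) (hεk : ε < k)
    (z : Finset (Fin (k * k)))
    (hz : z = Finset.univ.filter (fun e => ∃ i : Fin k, e.val = i.val * k)) :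
    -- every supported solution is one of the θ_i = block k i
    (∀ x : Finset (Fin (k * k)), k ≤ x.card →
      (∃ lam : Fin k → ℝ, (∀ i, 0 < lam i) ∧
        ∀ y : Finset (Fin (k * k)), k ≤ y.card →
          (∑ i, lam i * objF k ε i x) ≤ ∑ i, lam i * objF k ε i y) →
      ∃ i : Fin k, x = block k i) ∧
    -- the set {θ_i} fails to (k − ε')-approximate z for every ε' > ε
    (∀ ε' : ℝ, ε' > ε →
      ¬ ∃ i : Fin k, ∀ j : Fin k, objF k ε j (block k i) ≤ ((k : ℝ) - ε') * objF k ε j z) := by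
  have hk0 : 0 < k := by omega
  have hkR : (0:ℝ) < k := by exact_mod_cast hk0
  constructor
  · rintro x hxcard ⟨lam, hlamp, hopt⟩
    obtain ⟨j0, -, hj0⟩ := Finset.exists_min_image Finset.univ lam ⟨⟨0, hk0⟩, Finset.mem_univ _⟩
    have hopt0 : (∑ i, lam i * objF k ε i x) ≤ lam j0 * ((k:ℝ) - ε) := by
      have hy := hopt (block k j0) (card_block hk0 j0).ge
      have hsum : ∑ i, lam i * objF k ε i (block k j0) = lam j0 * ((k:ℝ) - ε) := by
        rw [Finset.sum_eq_single j0]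
        · rw [objF_block_self hk0]
        · intro b _ hb
          rw [objF_block_ne ε (Ne.symm hb), mul_zero]
        · intro h; exact absurd (Finset.mem_univ j0) h
      linarith
    have hterm : ∀ i, lam i * ((x ∩ block k i).card : ℝ) * (((k:ℝ) - ε)/k) ≤
        lam i * objF k ε i x := by
      intro i
      by_cases hsub : block k i ⊆ x
      · have hc : ((x ∩ block k i).card : ℝ) = (k : ℝ) := by
          exact_mod_cast congrArg Nat.cast (block_subset_card hk0 hsub)
        have hOF : objF k ε i x = (k:ℝ) - ε := by
          simp [objF, hsub, hc]
        rw [hOF, hc]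
        rw [show lam i * (k:ℝ) * (((k:ℝ) - ε)/k) = lam i * ((k:ℝ) - ε) by
          field_simp]
      · have hOF : objF k ε i x = ((x ∩ block k i).card : ℝ) := by
          simp [objF, hsub]
        rw [hOF]
        have h1 : ((k:ℝ) - ε)/k ≤ 1 := by
          rw [div_le_one hkR]; linarith
        have h2 : (0:ℝ) ≤ lam i * ((x ∩ block k i).card : ℝ) :=
          mul_nonneg (hlamp i).le (Nat.cast_nonneg _)
        nlinarith
    by_cases hT : ∃ t, block k t ⊆ x
    · obtain ⟨t, ht⟩ := hT
      refine ⟨t, ?_⟩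
      have hct : ((x ∩ block k t).card : ℝ) = (k : ℝ) := by
        exact_mod_cast congrArg Nat.cast (block_subset_card hk0 ht)
      have htt : lam t * objF k ε t x = lam t * ((k:ℝ) - ε) := by
        simp [objF, ht, hct]
      have hsplit : lam t * objF k ε t x + ∑ i ∈ Finset.univ.erase t, lam i * objF k ε i x
          = ∑ i, lam i * objF k ε i x :=
        Finset.add_sum_erase Finset.univ (fun i => lam i * objF k ε i x) (Finset.mem_univ t)
      have hle : ∑ i ∈ Finset.univ.erase t, lam i * objF k ε i x ≤ 0 := by
        have hlt := hj0 t (Finset.mem_univ t)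
        have : lam j0 * ((k:ℝ) - ε) ≤ lam t * ((k:ℝ) - ε) :=
          mul_le_mul_of_nonneg_right hlt (by linarith)
        linarith
      have hnn : ∀ i ∈ Finset.univ.erase t, 0 ≤ lam i * objF k ε i x := by
        intro i _
        refine le_trans ?_ (hterm i)
        exact mul_nonneg (mul_nonneg (hlamp i).le (Nat.cast_nonneg _))
          (div_nonneg (by linarith) hkR.le)
      have hzero : ∀ i ∈ Finset.univ.erase t, lam i * objF k ε i x = 0 :=
        (Finset.sum_eq_zero_iff_of_nonneg hnn).mp
          (le_antisymm hle (Finset.sum_nonneg hnn))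
      have hcz : ∀ i ∈ Finset.univ.erase t, (x ∩ block k i).card = 0 := by
        intro i hi
        have h0 := hzero i hi
        have hb := hterm i
        have hpos : (0:ℝ) < ((k:ℝ) - ε)/k := div_pos (by linarith) hkR
        have hcle : ((x ∩ block k i).card : ℝ) ≤ 0 := by
          nlinarith [hlamp i, mul_pos (hlamp i) hpos]
        exact_mod_cast le_antisymm hcle (Nat.cast_nonneg _)
      have hxk : x.card = k := by
        rw [← sum_card_inter hk0 x, ← Finset.add_sum_erase _ _ (Finset.mem_univ t),
          block_subset_card hk0 ht, Finset.sum_eq_zero hcz]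
        omega
      exact (Finset.eq_of_subset_of_card_le ht (by rw [hxk, card_block hk0])).symm
    · push_neg at hT
      exfalso
      have hOF : ∀ i, objF k ε i x = ((x ∩ block k i).card : ℝ) := by
        intro i; simp [objF, hT i]
      have hlow : lam j0 * (k:ℝ) ≤ ∑ i, lam i * objF k ε i x := by
        calc lam j0 * (k:ℝ) ≤ lam j0 * (x.card : ℝ) :=
              mul_le_mul_of_nonneg_left (by exact_mod_cast hxcard) (hlamp j0).le
          _ = ∑ i, lam j0 * ((x ∩ block k i).card : ℝ) := by
              rw [← Finset.mul_sum, ← Nat.cast_sum, sum_card_inter hk0 x]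
          _ ≤ ∑ i, lam i * ((x ∩ block k i).card : ℝ) :=
              Finset.sum_le_sum (fun i _ =>
                mul_le_mul_of_nonneg_right (hj0 i (Finset.mem_univ i)) (Nat.cast_nonneg _))
          _ = ∑ i, lam i * objF k ε i x :=
              Finset.sum_congr rfl (fun i _ => by rw [hOF i])
      nlinarith [hlamp j0]
  · intro ε' hε'
    rintro ⟨i, h⟩
    have h1 := h i
    rw [objF_block_self hk0, hz, objF_z hk ε i] at h1
    linarith
end

section
/- Let x and y be minimum-weight bases of a matroid M with weight function w : E → R such that w(x) = w(y) (equal total weight, both minimum). If x ≠ y, then there exists a bijection γ between x \ y and y \ x with w(u) = w(γ(u)) for all u ∈ x \ y. Consequently, the multiset of weights of elements of x equals that of y. -/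
/-!
Induct on `|x \ y| + |y \ x|`. Let `e` be an element of maximal weight in the symmetric
difference, say `e ∈ x \ y` (the other case is symmetric). Basis exchange gives `f ∈ y \ x`
with `x - e + f` a base; minimality of `x` forces `w e ≤ w f`, maximality of `e` the reverse.
So `x - e + f` is again a minimum-weight base, strictly closer to `y`, and `e ↦ f` extends the
weight-preserving bijection obtained for it.
-/

open Set
open scoped symmDiff

section

variable {α β : Type*}

/-- `w` takes the same values on `s` and `t`, counted with multiplicity. -/
def WeightBijOn (w : α → β) (s t : Set α) : Prop :=
  ∃ γ : α → α, BijOn γ s t ∧ ∀ u ∈ s, w (γ u) = w u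

section WeightBijOn

variable {w : α → β} {s t x y : Set α} {a b e f : α}

theorem weightBijOn_empty (w : α → β) : WeightBijOn w ∅ ∅ :=
  ⟨id, bijOn_empty _, by simp⟩

theorem WeightBijOn.symm (h : WeightBijOn w s t) : WeightBijOn w t s := by
  obtain ⟨γ, hγ, hwγ⟩ := h
  cases isEmpty_or_nonempty α
  · simpa [eq_empty_of_isEmpty] using weightBijOn_empty w
  have hinv := hγ.invOn_invFunOn
  refine ⟨Function.invFunOn γ s, hγ.symm hinv.symm, fun v hv => ?_⟩
  rw [← hwγ _ ((hγ.symm hinv.symm).mapsTo hv), hinv.2 hv]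

theorem WeightBijOn.of_sdiff_singleton (ha : a ∈ s) (hb : b ∈ t) (hw : w b = w a)
    (h : WeightBijOn w (s \ {a}) (t \ {b})) : WeightBijOn w s t := by
  classical
  obtain ⟨γ, hγ, hwγ⟩ := h
  refine ⟨Function.update γ a b, ?_, fun u hu => ?_⟩
  · have hγ' : BijOn (Function.update γ a b) (s \ {a}) (t \ {b}) :=
      hγ.congr fun u hu => (Function.update_of_ne hu.2 _ _).symm
    have := hγ'.insert (a := a) (by simp)
    rwa [Function.update_self, insert_sdiff_singleton, insert_eq_of_mem ha,
      insert_sdiff_singleton, insert_eq_of_mem hb] at this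
  · obtain rfl | hua := eq_or_ne u a
    · simpa
    · rw [Function.update_of_ne hua]
      exact hwγ u ⟨hu, hua⟩

theorem insert_sdiff_singleton_sdiff (hf : f ∈ y) : insert f (x \ {e}) \ y = (x \ y) \ {e} := by
  rw [insert_sdiff_of_mem _ hf, sdiff_sdiff_comm]

theorem sdiff_insert_sdiff_singleton (he : e ∉ y) :
    y \ insert f (x \ {e}) = (y \ x) \ {f} := by
  ext a
  simp only [mem_sdiff, mem_insert_iff, mem_singleton_iff]
  grind

theorem WeightBijOn.of_exchange (he : e ∈ x \ y) (hf : f ∈ y \ x) (hw : w f = w e)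
    (h : WeightBijOn w (insert f (x \ {e}) \ y) (y \ insert f (x \ {e}))) :
    WeightBijOn w (x \ y) (y \ x) := by
  rw [insert_sdiff_singleton_sdiff hf.1, sdiff_insert_sdiff_singleton he.2] at h
  exact h.of_sdiff_singleton he hf hw

end WeightBijOn

namespace Matroid

def IsMinWeightBase [AddCommMonoid β] [Preorder β] (M : Matroid α) (w : α → β) (x : Set α) :
    Prop :=
  M.IsBase x ∧ ∀ b, M.IsBase b → ∑ᶠ e ∈ x, w e ≤ ∑ᶠ e ∈ b, w e

variable [AddCommMonoid β] [LinearOrder β] [IsOrderedCancelAddMonoid β]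
  {M : Matroid α} [M.RankFinite] {w : α → β} {x y : Set α} {e : α}

theorem IsMinWeightBase.exists_exchange (hx : M.IsMinWeightBase w x) (hy : M.IsBase y)
    (he : e ∈ x \ y) (hmax : ∀ f ∈ y \ x, w f ≤ w e) :
    ∃ f ∈ y \ x, w f = w e ∧ M.IsMinWeightBase w (insert f (x \ {e})) := by
  obtain ⟨f, hf, hx'⟩ := hx.1.exchange hy he
  have hsum : ∀ g ∉ x \ {e}, ∑ᶠ i ∈ insert g (x \ {e}), w i = w g + ∑ᶠ i ∈ x \ {e}, w i :=
    fun g hg => finsum_mem_insert w hg hx.1.finite.sdiff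
  have hx_eq : ∑ᶠ i ∈ x, w i = w e + ∑ᶠ i ∈ x \ {e}, w i := by
    rw [← hsum e (by simp), insert_sdiff_singleton, insert_eq_of_mem he.1]
  have hf' : f ∉ x \ {e} := fun h => hf.2 h.1
  have hwf : w f = w e := by
    refine le_antisymm (hmax f hf) (le_of_add_le_add_right (a := ∑ᶠ i ∈ x \ {e}, w i) ?_)
    rw [← hx_eq, ← hsum f hf']
    exact hx.2 _ hx'
  refine ⟨f, hf, hwf, hx', fun b hb => ?_⟩
  rw [hsum f hf', hwf, ← hx_eq]
  exact hx.2 b hb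

theorem IsMinWeightBase.weightBijOn_sdiff (hx : M.IsMinWeightBase w x)
    (hy : M.IsMinWeightBase w y) : WeightBijOn w (x \ y) (y \ x) := by
  induction hn : (x \ y).ncard + (y \ x).ncard using Nat.strong_induction_on generalizing x y
    with | _ n ih
  obtain rfl | hxy := eq_or_ne x y
  · simpa using weightBijOn_empty w
  obtain ⟨e, he, hmax⟩ := exists_max_image (x ∆ y) w
    ((hx.1.finite.union hy.1.finite).subset symmDiff_subset_union) (symmDiff_nonempty.2 hxy)
  wlog hex : e ∈ x \ y generalizing x y
  · rw [symmDiff_comm] at he hmax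
    exact (this hy hx (by rwa [add_comm]) hxy.symm he hmax
      ((mem_symmDiff.1 he).resolve_right hex)).symm
  obtain ⟨f, hf, hwf, hx'⟩ := hx.exists_exchange hy.1 hex fun f hf => hmax f (Or.inr hf)
  refine WeightBijOn.of_exchange hex hf hwf (ih _ ?_ hx' hy rfl)
  rw [insert_sdiff_singleton_sdiff hf.1, sdiff_insert_sdiff_singleton hex.2, ← hn]
  exact add_lt_add (ncard_sdiff_singleton_lt_of_mem hex (hx.1.finite.subset sdiff_subset))
    (ncard_sdiff_singleton_lt_of_mem hf (hy.1.finite.subset sdiff_subset))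

end Matroid

end

theorem min_weight_bases_weight_bijection_general
    {α : Type*} [Fintype α] (M : Matroid α) (w : α → ℝ)
    (x y : Set α) (hx : M.IsBase x) (hy : M.IsBase y)
    (hxmin : ∀ b : Set α, M.IsBase b → (∑ᶠ e ∈ x, w e) ≤ ∑ᶠ e ∈ b, w e)
    (hymin : ∀ b : Set α, M.IsBase b → (∑ᶠ e ∈ y, w e) ≤ ∑ᶠ e ∈ b, w e) :
    ∃ γ : (x \ y : Set α) ≃ (y \ x : Set α), ∀ u : (x \ y : Set α), w u = w (γ u) := by
  obtain ⟨γ, hγ, hwγ⟩ :=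
    Matroid.IsMinWeightBase.weightBijOn_sdiff (M := M) ⟨hx, hxmin⟩ ⟨hy, hymin⟩
  exact ⟨hγ.equiv γ, fun u => (hwγ u u.2).symm⟩

/-- if `x` and `y` are minimum-weight bases of a matroid (hence of equal total
weight), and `x ≠ y`, then there is a weight-preserving bijection between `x \ y` and
`y \ x`. -/
theorem min_weight_bases_weight_bijection
    {α : Type*} [Fintype α] (M : Matroid α) (w : α → ℝ)
    (x y : Set α) (hx : M.IsBase x) (hy : M.IsBase y)
    (hxmin : ∀ b : Set α, M.IsBase b → (∑ᶠ e ∈ x, w e) ≤ ∑ᶠ e ∈ b, w e)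
    (hymin : ∀ b : Set α, M.IsBase b → (∑ᶠ e ∈ y, w e) ≤ ∑ᶠ e ∈ b, w e)
    (hw : (∑ᶠ e ∈ x, w e) = ∑ᶠ e ∈ y, w e)
    (hxy : x ≠ y) :
    ∃ γ : (x \ y : Set α) ≃ (y \ x : Set α), ∀ u : (x \ y : Set α), w u = w (γ u) :=
  min_weight_bases_weight_bijection_general M w x y hx hy hxmin hymin
end

section
/- Let τ and τ' be two linear orders (permutations) of the ground set E of a matroid M that differ by exactly one adjacent transposition, swapping consecutive elements u and v (with u before v in τ). Let x and x' be the bases returned by the greedy algorithm run with orders τ and τ' respectively. Then the symmetric difference of x and x' has size at most 2; moreover, |x Δ x'| = 2 holds if and only if x \ x' = {u} and x' \ x = {v}. -/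
open Classical in
/-- The greedy algorithm on a matroid: process elements in the order of the list, adding
each element whenever independence is preserved. -/
noncomputable def matroidGreedy {α : Type*} (M : Matroid α) (l : List α) : Set α :=
  l.foldl (fun s e => if M.Indep (insert e s) then insert e s else s) ∅

open Classical Set in
noncomputable def gStep {α : Type*} (M : Matroid α) : Set α → α → Set α :=
  fun s e => if M.Indep (insert e s) then insert e s else s


open Classical Set in
lemma gStep_pos {α : Type*} {M : Matroid α} {s : Set α} {e : α}
    (h : M.Indep (insert e s)) : gStep M s e = insert e s := by
  unfold gStep; exact if_pos h

open Classical Set in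
lemma gStep_neg {α : Type*} {M : Matroid α} {s : Set α} {e : α}
    (h : ¬ M.Indep (insert e s)) : gStep M s e = s := by
  unfold gStep; exact if_neg h

open Classical Set in
lemma gStep_indep {α : Type*} {M : Matroid α} {s : Set α} (hs : M.Indep s) (e : α) :
    M.Indep (gStep M s e) := by
  unfold gStep; split <;> assumption

open Classical Set in
lemma gFold_indep {α : Type*} {M : Matroid α} (l : List α) {s : Set α} (hs : M.Indep s) :
    M.Indep (l.foldl (gStep M) s) := by
  induction l generalizing s with
  | nil => exact hs
  | cons e l ih => exact ih (gStep_indep hs e)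

open Classical Set in
lemma gFold_congr {α : Type*} (M : Matroid α) (l : List α) :
    ∀ (I₁ I₂ : Set α), M.Indep I₁ → M.Indep I₂ → M.closure I₁ = M.closure I₂ →
    ∃ D : Set α, l.foldl (gStep M) I₁ = I₁ ∪ D ∧ l.foldl (gStep M) I₂ = I₂ ∪ D := by
  induction l with
  | nil => exact fun I₁ I₂ _ _ _ => ⟨∅, by simp, by simp⟩
  | cons e l ih =>
    intro I₁ I₂ h1 h2 hcl
    by_cases he : e ∈ M.E \ M.closure I₁
    · have he2 : e ∈ M.E \ M.closure I₂ := by rwa [← hcl]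
      have hi1 : M.Indep (insert e I₁) := h1.insert_indep_iff.2 (Or.inl he)
      have hi2 : M.Indep (insert e I₂) := h2.insert_indep_iff.2 (Or.inl he2)
      have hcl' : M.closure (insert e I₁) = M.closure (insert e I₂) := by
        rw [← M.closure_insert_closure_eq_closure_insert e I₁, hcl,
          M.closure_insert_closure_eq_closure_insert]
      obtain ⟨D, hD1, hD2⟩ := ih (insert e I₁) (insert e I₂) hi1 hi2 hcl'
      refine ⟨insert e D, ?_, ?_⟩
      · simp only [List.foldl_cons, gStep, if_pos hi1, hD1, Set.insert_union, Set.union_insert]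
      · simp only [List.foldl_cons, gStep, if_pos hi2, hD2, Set.insert_union, Set.union_insert]
    · have step1 : gStep M I₁ e = I₁ := by
        unfold gStep
        by_cases hmem : e ∈ I₁
        · simp [Set.insert_eq_of_mem hmem]
        · rw [if_neg]
          rw [h1.insert_indep_iff_of_notMem hmem]; exact he
      have step2 : gStep M I₂ e = I₂ := by
        unfold gStep
        by_cases hmem : e ∈ I₂
        · simp [Set.insert_eq_of_mem hmem]
        · rw [if_neg]
          rw [h2.insert_indep_iff_of_notMem hmem, ← hcl]; exact he
      simpa [List.foldl_cons, step1, step2] using ih I₁ I₂ h1 h2 hcl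

open Set in
lemma wrap_eq {α : Type*} {x x' : Set α} (u v : α) (h : x = x') :
    (symmDiff x x').ncard ≤ 2 ∧ ((symmDiff x x').ncard = 2 ↔ x \ x' = {u} ∧ x' \ x = {v}) := by
  subst h
  refine ⟨by simp [symmDiff_self], ?_, ?_⟩
  · intro h2
    rw [symmDiff_self] at h2
    simp at h2
  · rintro ⟨h1, -⟩
    rw [Set.diff_self] at h1
    exact absurd h1.symm (Set.singleton_ne_empty u)

/-- if the orders `τ` and `τ'` differ by one adjacent transposition swapping
`u` (earlier in `τ`) and `v`, then the greedy outputs `x, x'` satisfy `|x Δ x'| ≤ 2`, and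
`|x Δ x'| = 2` iff `x \ x' = {u}` and `x' \ x = {v}`. -/
theorem greedy_adjacent_swap_hamming
    {α : Type*} [Fintype α] (M : Matroid α)
    (τ τ' : List α) (hnd : τ.Nodup) (hfull : ∀ a : α, a ∈ τ)
    (u v : α)
    (hswap : ∃ l₁ l₂ : List α, τ = l₁ ++ u :: v :: l₂ ∧ τ' = l₁ ++ v :: u :: l₂)
    (x x' : Set α) (hx : x = matroidGreedy M τ) (hx' : x' = matroidGreedy M τ') :
    (symmDiff x x').ncard ≤ 2 ∧
      ((symmDiff x x').ncard = 2 ↔ x \ x' = {u} ∧ x' \ x = {v}) := by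
  obtain ⟨l₁, l₂, ht, ht'⟩ := hswap
  have hmg : ∀ l : List α, matroidGreedy M l = l.foldl (gStep M) ∅ := fun _ => rfl
  set s : Set α := l₁.foldl (gStep M) ∅ with hs
  have hsI : M.Indep s := gFold_indep _ M.empty_indep
  have hx2 : x = l₂.foldl (gStep M) (gStep M (gStep M s u) v) := by
    rw [hx, hmg, ht, List.foldl_append]; rfl
  have hx'2 : x' = l₂.foldl (gStep M) (gStep M (gStep M s v) u) := by
    rw [hx', hmg, ht', List.foldl_append]; rfl
  by_cases hR : M.Indep (insert v (insert u s))
  · -- both greedy runs reach the same state after the two swapped elements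
    have hP : M.Indep (insert u s) := hR.subset (Set.subset_insert _ _)
    have hQ : M.Indep (insert v s) := hR.subset (Set.insert_subset_insert (Set.subset_insert _ _))
    have hR' : M.Indep (insert u (insert v s)) := by rwa [Set.insert_comm]
    have e1 : gStep M (gStep M s u) v = insert v (insert u s) := by
      rw [gStep_pos hP, gStep_pos hR]
    have e2 : gStep M (gStep M s v) u = insert u (insert v s) := by
      rw [gStep_pos hQ, gStep_pos hR']
    exact wrap_eq u v (by rw [hx2, hx'2, e1, e2, Set.insert_comm])
  · have hR' : ¬ M.Indep (insert u (insert v s)) := by rwa [Set.insert_comm]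
    by_cases hP : M.Indep (insert u s) <;> by_cases hQ : M.Indep (insert v s)
    · -- the interesting case: u, v individually addable but not both
      have e1 : gStep M (gStep M s u) v = insert u s := by
        rw [gStep_pos hP, gStep_neg hR]
      have e2 : gStep M (gStep M s v) u = insert v s := by
        rw [gStep_pos hQ, gStep_neg hR']
      rw [e1] at hx2; rw [e2] at hx'2
      have huE : u ∈ M.E := hP.subset_ground (Set.mem_insert _ _)
      have hvE : v ∈ M.E := hQ.subset_ground (Set.mem_insert _ _)
      have hvA : v ∉ insert u s := fun h => hR (by rwa [Set.insert_eq_of_mem h])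
      have huB : u ∉ insert v s := fun h => hR' (by rwa [Set.insert_eq_of_mem h])
      have huv : u ≠ v := fun h => hvA (h ▸ Set.mem_insert u s)
      have hvcl : v ∈ M.closure (insert u s) := by
        by_contra hcon
        exact hR (hP.insert_indep_iff_of_notMem hvA |>.2 ⟨hvE, hcon⟩)
      have hucl : u ∈ M.closure (insert v s) := by
        by_contra hcon
        exact hR' (hQ.insert_indep_iff_of_notMem huB |>.2 ⟨huE, hcon⟩)
      have hclEq : M.closure (insert u s) = M.closure (insert v s) := by
        rw [← Matroid.closure_insert_eq_of_mem_closure hvcl,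
          ← Matroid.closure_insert_eq_of_mem_closure hucl, Set.insert_comm]
      obtain ⟨D, hD1, hD2⟩ := gFold_congr M l₂ (insert u s) (insert v s) hP hQ hclEq
      rw [hD1] at hx2; rw [hD2] at hx'2
      have hxI : M.Indep x := by rw [hx2, ← hD1]; exact gFold_indep _ hP
      have hx'I : M.Indep x' := by rw [hx'2, ← hD2]; exact gFold_indep _ hQ
      have hux : u ∈ x := hx2 ▸ Or.inl (Set.mem_insert _ _)
      have hvx' : v ∈ x' := hx'2 ▸ Or.inl (Set.mem_insert _ _)
      have hux' : u ∉ x' := by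
        intro h
        rcases hx'2 ▸ h with h | h
        · exact huB h
        · exact hR' (hx'I.subset (by
            rw [hx'2]
            exact Set.insert_subset (Or.inr h) Set.subset_union_left))
      have hvx : v ∉ x := by
        intro h
        rcases hx2 ▸ h with h | h
        · exact hvA h
        · exact hR (hxI.subset (by
            rw [hx2]
            exact Set.insert_subset (Or.inr h) Set.subset_union_left))
      have hd1 : x \ x' = {u} := by
        refine Set.eq_singleton_iff_unique_mem.2 ⟨⟨hux, hux'⟩, ?_⟩
        rintro w ⟨hw, hw'⟩
        rcases hx2 ▸ hw with h | h
        · rcases h with h | h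
          · exact h
          · exact absurd (hx'2 ▸ (Or.inl (Set.mem_insert_of_mem _ h))) hw'
        · exact absurd (hx'2 ▸ (Or.inr h : w ∈ insert v s ∪ D)) hw'
      have hd2 : x' \ x = {v} := by
        refine Set.eq_singleton_iff_unique_mem.2 ⟨⟨hvx', hvx⟩, ?_⟩
        rintro w ⟨hw, hw'⟩
        rcases hx'2 ▸ hw with h | h
        · rcases h with h | h
          · exact h
          · exact absurd (hx2 ▸ (Or.inl (Set.mem_insert_of_mem _ h))) hw'
        · exact absurd (hx2 ▸ (Or.inr h : w ∈ insert u s ∪ D)) hw'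
      have hsd : symmDiff x x' = {u, v} := by
        rw [Set.symmDiff_def, hd1, hd2, Set.singleton_union]
      rw [hsd, Set.ncard_pair huv]
      exact ⟨le_refl 2, fun _ => ⟨hd1, hd2⟩, fun _ => rfl⟩
    · have e1 : gStep M (gStep M s u) v = insert u s := by
        rw [gStep_pos hP, gStep_neg hR]
      have e2 : gStep M (gStep M s v) u = insert u s := by
        rw [gStep_neg hQ, gStep_pos hP]
      exact wrap_eq u v (by rw [hx2, hx'2, e1, e2])
    · have e1 : gStep M (gStep M s u) v = insert v s := by
        rw [gStep_neg hP, gStep_pos hQ]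
      have e2 : gStep M (gStep M s v) u = insert v s := by
        rw [gStep_pos hQ, gStep_neg hR']
      exact wrap_eq u v (by rw [hx2, hx'2, e1, e2])
    · have e1 : gStep M (gStep M s u) v = s := by
        rw [gStep_neg hP, gStep_neg hQ]
      have e2 : gStep M (gStep M s v) u = s := by
        rw [gStep_neg hQ, gStep_neg hP]
      exact wrap_eq u v (by rw [hx2, hx'2, e1, e2])
end

section
/- If the greedy algorithm on a matroid, run with orders τ and τ' differing by an adjacent swap of elements u, v, produces bases x and x', and v ∈ x, then x = x'. -/
open Classical in
noncomputable def greedyStep {α : Type*} (M : Matroid α) (s : Set α) (e : α) : Set α :=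
  if M.Indep (insert e s) then insert e s else s

section Greedy

variable {α : Type*} (M : Matroid α)

theorem matroidGreedy_append (l₁ l₂ : List α) :
    matroidGreedy M (l₁ ++ l₂) = l₂.foldl (greedyStep M) (matroidGreedy M l₁) :=
  List.foldl_append

theorem greedyStep_subset_insert (s : Set α) (e : α) : greedyStep M s e ⊆ insert e s := by
  unfold greedyStep
  split_ifs
  exacts [subset_rfl, Set.subset_insert e s]

theorem foldl_greedyStep_subset (l : List α) (s : Set α) :
    l.foldl (greedyStep M) s ⊆ s ∪ {a | a ∈ l} := by
  induction l generalizing s with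
  | nil => simp
  | cons e l ih =>
    refine (ih _).trans (Set.union_subset ((greedyStep_subset_insert M s e).trans ?_) ?_) <;>
      intro a <;> simp +contextual [or_imp]

theorem greedyStep_of_indep {s : Set α} {e : α} (h : M.Indep (insert e s)) :
    greedyStep M s e = insert e s :=
  if_pos h

theorem greedyStep_of_not_indep {s : Set α} {e : α} (h : ¬ M.Indep (insert e s)) :
    greedyStep M s e = s :=
  if_neg h

theorem indep_insert_of_mem_greedyStep {s : Set α} {e : α} (he : e ∉ s)
    (h : e ∈ greedyStep M s e) : M.Indep (insert e s) := by
  by_contra hind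
  exact he (greedyStep_of_not_indep M hind ▸ h)

theorem greedyStep_comm_of_indep {s : Set α} {u v : α}
    (hv : M.Indep (insert v (greedyStep M s u))) :
    greedyStep M (greedyStep M s u) v = greedyStep M (greedyStep M s v) u := by
  rw [greedyStep_of_indep M hv]
  by_cases hu : M.Indep (insert u s)
  · rw [greedyStep_of_indep M hu] at hv ⊢
    have hvs : M.Indep (insert v s) := hv.subset (Set.insert_subset_insert (Set.subset_insert _ _))
    rw [greedyStep_of_indep M hvs, greedyStep_of_indep M (Set.insert_comm u v s ▸ hv),
      Set.insert_comm]
  · rw [greedyStep_of_not_indep M hu] at hv ⊢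
    have huvs : ¬ M.Indep (insert u (insert v s)) := fun h =>
      hu (h.subset (Set.insert_subset_insert (Set.subset_insert _ _)))
    rw [greedyStep_of_indep M hv, greedyStep_of_not_indep M huvs]

end Greedy

theorem greedy_adjacent_swap_eq_of_later_mem_general
    {α : Type*} (M : Matroid α)
    (τ τ' : List α) (hnd : τ.Nodup)
    (u v : α)
    (hswap : ∃ l₁ l₂ : List α, τ = l₁ ++ u :: v :: l₂ ∧ τ' = l₁ ++ v :: u :: l₂)
    (x x' : Set α) (hx : x = matroidGreedy M τ) (hx' : x' = matroidGreedy M τ')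
    (hv : v ∈ x) :
    x = x' := by
  obtain ⟨l₁, l₂, rfl, rfl⟩ := hswap
  subst hx hx'
  simp only [List.nodup_append, List.nodup_cons, List.mem_cons, not_or] at hnd
  obtain ⟨-, ⟨⟨huv, -⟩, hvl₂, -⟩, hl₁⟩ := hnd
  simp only [matroidGreedy_append, List.foldl_cons] at hv ⊢
  set s := matroidGreedy M l₁
  have hvs : v ∉ s := fun h =>
    hl₁ v (by simpa using foldl_greedyStep_subset M l₁ ∅ h) v (Or.inr (Or.inl rfl)) rfl
  have hvsu : v ∉ greedyStep M s u := fun h => by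
    rcases greedyStep_subset_insert M s u h with rfl | h
    exacts [huv rfl, hvs h]
  have hv_step : v ∈ greedyStep M (greedyStep M s u) v := by
    rcases foldl_greedyStep_subset M l₂ _ hv with h | h
    exacts [h, absurd h hvl₂]
  rw [greedyStep_comm_of_indep M (indep_insert_of_mem_greedyStep M hvsu hv_step)]

/-- if the greedy algorithm, run with orders `τ` and `τ'` differing by an
adjacent swap of `u` (earlier in `τ`) and `v`, produces bases `x` and `x'`, and `v ∈ x`,
then `x = x'`. -/
theorem greedy_adjacent_swap_eq_of_later_mem
    {α : Type*} [Fintype α] (M : Matroid α)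
    (τ τ' : List α) (hnd : τ.Nodup) (hfull : ∀ a : α, a ∈ τ)
    (u v : α)
    (hswap : ∃ l₁ l₂ : List α, τ = l₁ ++ u :: v :: l₂ ∧ τ' = l₁ ++ v :: u :: l₂)
    (x x' : Set α) (hx : x = matroidGreedy M τ) (hx' : x' = matroidGreedy M τ')
    (hv : v ∈ x) :
    x = x' :=
  greedy_adjacent_swap_eq_of_later_mem_general M τ τ' hnd u v hswap x x' hx hx' hv
end

section
/- If the greedy algorithm on a matroid, run with orders τ and τ' differing by an adjacent swap of elements u (earlier in τ) and v, produces bases x and x', and u ∉ x, then x = x'. -/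
/-! If `u` is rejected at its turn, it is rejected at every later turn as well, since the
current set only grows and dependence is inherited by supersets. Hence `u` and `v` commute
in the greedy run, and the two runs agree step by step afterwards. -/

namespace Matroid

variable {α : Type*} (M : Matroid α)

open Classical in
noncomputable def greedyStep (s : Set α) (e : α) : Set α :=
  if M.Indep (insert e s) then insert e s else s

theorem matroidGreedy_eq_foldl_greedyStep (l : List α) :
    matroidGreedy M l = l.foldl M.greedyStep ∅ :=
  rfl

variable {M}

theorem greedyStep_of_indep {s : Set α} {e : α} (h : M.Indep (insert e s)) :
    M.greedyStep s e = insert e s :=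
  if_pos h

theorem greedyStep_of_not_indep {s : Set α} {e : α} (h : ¬ M.Indep (insert e s)) :
    M.greedyStep s e = s :=
  if_neg h

theorem subset_greedyStep (s : Set α) (e : α) : s ⊆ M.greedyStep s e := by
  by_cases h : M.Indep (insert e s)
  · rw [greedyStep_of_indep h]
    exact Set.subset_insert e s
  · rw [greedyStep_of_not_indep h]

theorem subset_foldl_greedyStep (l : List α) (s : Set α) : s ⊆ l.foldl M.greedyStep s := by
  induction l generalizing s with
  | nil => exact subset_rfl
  | cons e l ih => exact (subset_greedyStep s e).trans (ih _)

theorem mem_foldl_greedyStep_of_indep {s : Set α} {e : α} (l : List α)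
    (h : M.Indep (insert e s)) : e ∈ (e :: l).foldl M.greedyStep s := by
  apply subset_foldl_greedyStep l
  rw [greedyStep_of_indep h]
  exact Set.mem_insert e s

theorem greedyStep_of_not_indep_of_subset {s t : Set α} {e : α} (h : ¬ M.Indep (insert e s))
    (hst : s ⊆ t) : M.greedyStep t e = t :=
  greedyStep_of_not_indep fun ht => h (ht.subset (Set.insert_subset_insert hst))

theorem greedyStep_swap_of_not_indep {s : Set α} {u : α} (v : α) (h : ¬ M.Indep (insert u s)) :
    M.greedyStep (M.greedyStep s u) v = M.greedyStep (M.greedyStep s v) u := by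
  rw [greedyStep_of_not_indep h, greedyStep_of_not_indep_of_subset h (subset_greedyStep s v)]

end Matroid

open Matroid in
theorem greedy_adjacent_swap_eq_of_earlier_not_mem_general
    {α : Type*} (M : Matroid α)
    (τ τ' : List α)
    (u v : α)
    (hswap : ∃ l₁ l₂ : List α, τ = l₁ ++ u :: v :: l₂ ∧ τ' = l₁ ++ v :: u :: l₂)
    (x x' : Set α) (hx : x = matroidGreedy M τ) (hx' : x' = matroidGreedy M τ')
    (hu : u ∉ x) :
    x = x' := by
  obtain ⟨l₁, l₂, rfl, rfl⟩ := hswap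
  subst hx hx'
  simp only [matroidGreedy_eq_foldl_greedyStep, List.foldl_append] at hu ⊢
  have hrejected : ¬ M.Indep (insert u (l₁.foldl M.greedyStep ∅)) := fun h =>
    hu (mem_foldl_greedyStep_of_indep (v :: l₂) h)
  rw [List.foldl_cons, List.foldl_cons, List.foldl_cons, List.foldl_cons,
    greedyStep_swap_of_not_indep v hrejected]

/-- if the greedy algorithm, run with orders `τ` and `τ'` differing by an
adjacent swap of `u` (earlier in `τ`) and `v`, produces bases `x` and `x'`, and `u ∉ x`,
then `x = x'`. -/
theorem greedy_adjacent_swap_eq_of_earlier_not_mem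
    {α : Type*} [Fintype α] (M : Matroid α)
    (τ τ' : List α) (hnd : τ.Nodup) (hfull : ∀ a : α, a ∈ τ)
    (u v : α)
    (hswap : ∃ l₁ l₂ : List α, τ = l₁ ++ u :: v :: l₂ ∧ τ' = l₁ ++ v :: u :: l₂)
    (x x' : Set α) (hx : x = matroidGreedy M τ) (hx' : x' = matroidGreedy M τ')
    (hu : u ∉ x) :
    x = x' :=
  greedy_adjacent_swap_eq_of_earlier_not_mem_general M τ τ' u v hswap x x' hx hx' hu
end

section
/- Consider a sequence of subsets p⁽⁰⁾, p⁽¹⁾, ..., p⁽ᴸ⁾ of {1,...,m}, each of size n, such that each p⁽ᵗ⁺¹⁾ is obtained from p⁽ᵗ⁾ by removing one element and adding a strictly larger element not in p⁽ᵗ⁾, and no ordered pair (removed, added) is used twice across the sequence. Then L ≤ h·m − h(h+1)/2 where h = ⌈√(2n−1)⌉, provided n ≤ m − n; more generally L ≤ h·m − h(h+1)/2 with h = ⌈√(2·min{n,m−n}−1)⌉. -/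
/-!
Each move `(a, b)` raises the sum of positions `∑ e ∈ p, e` by its length `b - a ≥ 1`, and on
`n`-subsets of `Fin m` this sum ranges over an interval of length `n (m - n) = k (m - k)`,
`k = min n (m - n)`; so the lengths of all moves add up to at most `k (m - k)`. Since no move is
repeated, at most `m - l` moves have length `l`. Weighting every move by
`h + 1 = d + (h + 1 - d)` (truncated) gives `(h + 1) L ≤ k (m - k) + ∑_{l ≤ h} (h + 1 - l) (m - l)`,
and `h (h + 1) ≥ 2 k` gives `k (m - k) ≤ ∑_{l ≤ h} l (m - l)`, whence
`(h + 1) L ≤ (h + 1) ∑_{l ≤ h} (m - l) = (h + 1) (h m - h (h + 1) / 2)`.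
-/

open Finset

namespace Finset

theorem sum_range_card_le_sum (s : Finset ℕ) : ∑ i ∈ range #s, i ≤ ∑ x ∈ s, x := by
  induction s using Finset.induction_on_max with
  | empty => simp
  | insert a s hlt ih =>
    have hcard : #s ≤ a := by simpa using card_le_card fun x hx ↦ mem_range.2 (hlt x hx)
    rw [card_insert_of_notMem fun ha ↦ (hlt a ha).false, sum_range_succ,
      sum_insert fun ha ↦ (hlt a ha).false]
    omega

theorem sum_range_card_le_sum_val {m : ℕ} (s : Finset (Fin m)) :
    ∑ i ∈ range #s, i ≤ ∑ e ∈ s, (e : ℕ) := by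
  simpa using sum_range_card_le_sum (s.map Fin.valEmbedding)

theorem sum_val_le_sum_val_add {m : ℕ} (s t : Finset (Fin m)) (hst : #s = #t) :
    ∑ e ∈ t, (e : ℕ) ≤ ∑ e ∈ s, (e : ℕ) + #s * (m - #s) := by
  have hsm : #s ≤ m := by simpa using card_le_univ s
  have hs := sum_range_card_le_sum_val s
  have htc := sum_range_card_le_sum_val tᶜ
  rw [card_compl, Fintype.card_fin, ← hst] at htc
  have htotal : ∑ e ∈ t, (e : ℕ) + ∑ e ∈ tᶜ, (e : ℕ) = ∑ i ∈ range m, i := by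
    rw [sum_add_sum_compl, Fin.sum_univ_eq_sum_range (fun i ↦ i)]
  have hsplit : ∑ i ∈ range m, i =
      ∑ i ∈ range #s, i + ∑ i ∈ range (m - #s), i + #s * (m - #s) := by
    conv_lhs => rw [← Nat.add_sub_cancel' hsm, sum_range_add]
    rw [sum_add_distrib, sum_const, card_range, smul_eq_mul]
    ring
  omega

theorem sum_Icc_id_mul_two (h : ℕ) : (∑ l ∈ Icc 1 h, l) * 2 = h * (h + 1) := by
  induction h with
  | zero => simp
  | succ h ih => rw [sum_Icc_succ_top (by omega), add_mul, ih]; ring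

theorem sum_Icc_const_tsub (m h : ℕ) (hhm : h ≤ m) :
    ∑ l ∈ Icc 1 h, (m - l) = h * m - h * (h + 1) / 2 := by
  have hsum : ∑ l ∈ Icc 1 h, (m - l) + ∑ l ∈ Icc 1 h, l = h * m := by
    rw [← sum_add_distrib,
      sum_congr rfl fun l hl ↦ Nat.sub_add_cancel ((mem_Icc.1 hl).2.trans hhm)]
    simp
  have := sum_Icc_id_mul_two h
  generalize h * m = a at *
  generalize h * (h + 1) = b at *
  omega

theorem succ_mul_card_le_sum_add_sum_Icc {ι : Type*} (s : Finset ι) (d : ι → ℕ) (c : ℕ → ℕ)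
    (hd : ∀ t ∈ s, 1 ≤ d t) (hc : ∀ l, #{t ∈ s | d t = l} ≤ c l) (h : ℕ) :
    (h + 1) * #s ≤ ∑ t ∈ s, d t + ∑ l ∈ Icc 1 h, (h + 1 - l) * c l := by
  have hshort : ∑ t ∈ s, (h + 1 - d t) = ∑ l ∈ Icc 1 h, (h + 1 - l) * #{t ∈ s | d t = l} := by
    rw [← sum_filter_of_ne (p := fun t ↦ d t ∈ Icc 1 h) fun t ht hne ↦ by
      simp only [mem_Icc]; have := hd t ht; omega,
      ← sum_fiberwise_eq_sum_filter]
    refine sum_congr rfl fun l _ ↦ ?_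
    rw [sum_congr rfl fun t ht ↦ by rw [(mem_filter.1 ht).2], sum_const, smul_eq_mul, mul_comm]
  calc (h + 1) * #s = ∑ t ∈ s, (h + 1) := by rw [sum_const, smul_eq_mul, mul_comm]
    _ ≤ ∑ t ∈ s, (d t + (h + 1 - d t)) := sum_le_sum fun t _ ↦ by omega
    _ = ∑ t ∈ s, d t + ∑ l ∈ Icc 1 h, (h + 1 - l) * #{t ∈ s | d t = l} := by
      rw [sum_add_distrib, hshort]
    _ ≤ ∑ t ∈ s, d t + ∑ l ∈ Icc 1 h, (h + 1 - l) * c l := by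
      gcongr with l
      exact hc l

end Finset

theorem mul_tsub_le_sum_Icc_mul_tsub {k m h : ℕ} (hk : 2 * k ≤ h * (h + 1)) (hhm : h ≤ m) :
    k * (m - k) ≤ ∑ l ∈ Icc 1 h, l * (m - l) := by
  induction h generalizing k with
  | zero => simp_all
  | succ h ih =>
    rw [sum_Icc_succ_top (by omega)]
    by_cases hkh : 2 * k ≤ h * (h + 1)
    · exact (ih hkh (by omega)).trans (Nat.le_add_right _ _)
    have hk' : h + 1 ≤ k := by nlinarith [Nat.le_mul_self h]
    rcases le_total k m with hkm | hkm
    -- `k (m - k) - (k - h - 1) (m - k + h + 1) = (h + 1) (m - 2 k + h + 1) ≤ (h + 1) (m - h - 1)`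
    · have := ih (k := k - (h + 1)) (by rw [Nat.mul_sub]; ring_nf at hk ⊢; omega) (by omega)
      zify [hkm, hk', hhm, (by omega : k - (h + 1) ≤ m)] at this ⊢
      nlinarith
    · simp [Nat.sub_eq_zero_of_le hkm]

theorem le_natCeil_sqrt_sq (x : ℝ) : x ≤ (⌈√x⌉₊ : ℝ) ^ 2 := by
  rcases le_total 0 x with hx | hx
  · exact (Real.sqrt_le_left (Nat.cast_nonneg _)).1 (Nat.le_ceil _)
  · exact hx.trans (sq_nonneg _)

theorem two_mul_le_natCeil_sqrt_mul_succ (k : ℕ) :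
    2 * k ≤ ⌈√(2 * k - 1 : ℝ)⌉₊ * (⌈√(2 * k - 1 : ℝ)⌉₊ + 1) := by
  set h := ⌈√(2 * k - 1 : ℝ)⌉₊
  have hsq : 2 * k ≤ h ^ 2 + 1 := by
    have := le_natCeil_sqrt_sq (2 * k - 1 : ℝ)
    exact_mod_cast (by linarith : (2 * k : ℝ) ≤ h ^ 2 + 1)
  rcases h with _ | h
  · omega
  · nlinarith

theorem natCeil_sqrt_le {k m : ℕ} (hkm : 2 * k ≤ m) : ⌈√(2 * k - 1 : ℝ)⌉₊ ≤ m := by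
  rw [Nat.ceil_le, Real.sqrt_le_left (Nat.cast_nonneg _)]
  have : (2 * k : ℝ) ≤ m := by exact_mod_cast hkm
  nlinarith

def IsMove {m : ℕ} (s s' : Finset (Fin m)) (x : Fin m × Fin m) : Prop :=
  x.1 ∈ s ∧ x.2 ∉ s ∧ x.1 < x.2 ∧ s' = insert x.2 (s.erase x.1)

theorem IsMove.sum_val_add {m : ℕ} {s s' : Finset (Fin m)} {x : Fin m × Fin m}
    (hx : IsMove s s' x) : ∑ e ∈ s', (e : ℕ) + x.1 = ∑ e ∈ s, (e : ℕ) + x.2 := by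
  obtain ⟨h1, h2, -, rfl⟩ := hx
  rw [sum_insert fun h ↦ h2 (mem_of_mem_erase h), ← add_sum_erase s _ h1]
  ring

section MoveSequence

variable {m L : ℕ} {p : ℕ → Finset (Fin m)} {mv : ℕ → Fin m × Fin m}

theorem sum_move_length_le {n : ℕ} (hcard : ∀ t ≤ L, #(p t) = n)
    (hmv : ∀ t < L, IsMove (p t) (p (t + 1)) (mv t)) :
    ∑ t ∈ range L, ((mv t).2 - (mv t).1 : ℕ) ≤ n * (m - n) := by
  have htele : ∀ t ≤ L,
      ∑ e ∈ p t, (e : ℕ) = ∑ e ∈ p 0, (e : ℕ) + ∑ i ∈ range t, ((mv i).2 - (mv i).1 : ℕ) := by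
    intro t ht
    induction t with
    | zero => simp
    | succ t ih =>
      have hlt : ((mv t).1 : ℕ) < (mv t).2 := (hmv t ht).2.2.1
      have := (hmv t ht).sum_val_add
      rw [sum_range_succ, ← add_assoc, ← ih (by omega)]
      omega
  have := sum_val_le_sum_val_add (p 0) (p L) (by rw [hcard 0 (Nat.zero_le _), hcard L le_rfl])
  rw [htele L le_rfl, hcard 0 (Nat.zero_le _)] at this
  omega

theorem card_filter_move_length_eq_le (hmv : ∀ t < L, IsMove (p t) (p (t + 1)) (mv t))
    (hinj : ∀ t < L, ∀ t' < L, mv t = mv t' → t = t') (l : ℕ) :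
    #{t ∈ range L | ((mv t).2 - (mv t).1 : ℕ) = l} ≤ m - l := by
  have hlt : ∀ t < L, ((mv t).1 : ℕ) < (mv t).2 := fun t ht ↦ (hmv t ht).2.2.1
  simpa using card_le_card_of_injOn (t := range (m - l)) (fun t ↦ ((mv t).1 : ℕ))
    (fun t ht ↦ by
      simp only [coe_filter, mem_range, Set.mem_ofPred_eq, coe_range, Set.mem_Iio] at ht ⊢
      have := hlt t ht.1
      have := (mv t).2.isLt
      omega)
    fun t ht t' ht' heq ↦ by
      simp only [coe_filter, mem_range, Set.mem_ofPred_eq] at ht ht'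
      have := hlt t ht.1
      have := hlt t' ht'.1
      refine hinj t ht.1 t' ht'.1 (Prod.ext (Fin.ext heq) (Fin.ext ?_))
      simp only at heq
      omega

end MoveSequence

/-- consider a sequence `p 0, p 1, ..., p L` of `n`-element subsets of
`{1,...,m}` (modelled as `Fin m`), where each `p (t+1)` is obtained from `p t` by
removing one element and adding a strictly larger element not in `p t`, and no ordered
pair (removed, added) is used twice. Then `L ≤ h·m − h(h+1)/2` where
`h = ⌈√(2·min{n, m−n} − 1)⌉`. -/
theorem move_sequence_length_bound
    (m n L : ℕ) (p : ℕ → Finset (Fin m))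
    (hcard : ∀ t ≤ L, (p t).card = n)
    (mv : ℕ → Fin m × Fin m)
    (hmv : ∀ t < L,
      (mv t).1 ∈ p t ∧ (mv t).2 ∉ p t ∧ (mv t).1 < (mv t).2 ∧
      p (t + 1) = insert (mv t).2 ((p t).erase (mv t).1))
    (hinj : ∀ t < L, ∀ t' < L, mv t = mv t' → t = t')
    (h : ℕ) (hh : h = ⌈Real.sqrt (2 * (min n (m - n) : ℝ) - 1)⌉₊) :
    L ≤ h * m - h * (h + 1) / 2 := by
  have hnm : n ≤ m := by simpa [hcard L le_rfl] using card_le_univ (p L)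
  set k := min n (m - n) with hk
  have hnk : n * (m - n) = k * (m - k) := by
    rcases le_total n (m - n) with hle | hle
    · rw [hk, min_eq_left hle]
    · rw [hk, min_eq_right hle, Nat.sub_sub_self hnm, mul_comm]
  rw [← Nat.cast_sub hnm, ← Nat.cast_min] at hh
  have hkh : 2 * k ≤ h * (h + 1) := hh ▸ two_mul_le_natCeil_sqrt_mul_succ k
  have hhm : h ≤ m := hh ▸ natCeil_sqrt_le (by omega)
  have hcount := succ_mul_card_le_sum_add_sum_Icc (range L)
    (fun t ↦ ((mv t).2 - (mv t).1 : ℕ)) (m - ·)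
    (fun t ht ↦ Nat.sub_pos_of_lt (hmv t (mem_range.1 ht)).2.2.1)
    (card_filter_move_length_eq_le hmv hinj) h
  rw [card_range] at hcount
  rw [← sum_Icc_const_tsub m h hhm]
  refine Nat.le_of_mul_le_mul_left ?_ h.succ_pos
  calc (h + 1) * L ≤ k * (m - k) + ∑ l ∈ Icc 1 h, (h + 1 - l) * (m - l) := by
        rw [← hnk]; exact hcount.trans (by gcongr; exact sum_move_length_le hcard hmv)
    _ ≤ ∑ l ∈ Icc 1 h, l * (m - l) + ∑ l ∈ Icc 1 h, (h + 1 - l) * (m - l) := by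
        gcongr; exact mul_tsub_le_sum_Icc_mul_tsub hkh hhm
    _ = (h + 1) * ∑ l ∈ Icc 1 h, (m - l) := by
        rw [← sum_add_distrib, mul_sum]
        refine sum_congr rfl fun l hl ↦ ?_
        rw [← add_mul, Nat.add_sub_cancel' ((mem_Icc.1 hl).2.trans h.le_succ)]
end

section
/- Greedy characterizes optimality for linear weights on matroids: a base x of a matroid M minimizes a weight function w over all bases if and only if x is the output of the greedy algorithm on some permutation of E that sorts w in non-decreasing order. -/
/-!
If a base `y` differs from the greedy output `G` on a list `l`, let `e` be the first element of
`l` on which they disagree. Greedy must have taken `e` (otherwise `e` together with the common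
prefix would be dependent inside `y`), so `e ∈ G \ y`, and swapping `e` into `y` evicts some
`f ∈ y \ G` which comes after `e` in `l`. When `l` is sorted by weight this exchange never makes
`y` heavier and brings it one step closer to `G`, so `G` has minimum weight. Conversely, if `x`
has minimum weight, sort by weight and put the elements of `x` first among equal weights: if the
greedy output were not `x`, the exchange applied to `x` would have `w e < w f` and produce a
lighter base.
-/

open Set

namespace Matroid

variable {α : Type*} {M : Matroid α} {B₁ B₂ : Set α} {e : α}

/-- The element leaving `B₂` is taken from the fundamental circuit of `e` in `B₂`, outside `B₁`. -/
lemma IsBase.rev_exchange (hB₁ : M.IsBase B₁) (hB₂ : M.IsBase B₂) (he : e ∈ B₁ \ B₂) :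
    ∃ f ∈ B₂ \ B₁, M.IsBase (insert e (B₂ \ {f})) := by
  obtain ⟨heB₁, heB₂⟩ := he
  have heE : e ∈ M.E := hB₁.subset_ground heB₁
  have hC := hB₂.fundCircuit_isCircuit heE heB₂
  obtain ⟨f, hfC, hfB₁⟩ := not_subset.1 fun h ↦ hC.not_indep (hB₁.indep.subset h)
  have hfe : f ≠ e := ne_of_mem_of_not_mem heB₁ hfB₁ |>.symm
  have hfB₂ : f ∈ B₂ := ((M.fundCircuit_subset_insert e B₂) hfC).resolve_left hfe
  have hI := (hB₂.indep.mem_fundCircuit_iff (by rwa [hB₂.closure_eq]) heB₂).1 hfC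
  refine ⟨f, ⟨hfB₂, hfB₁⟩, ?_⟩
  rw [insert_sdiff_singleton_comm hfe.symm]
  exact hB₂.exchange_isBase_of_indep' hfB₂ heB₂ hI

end Matroid

section Greedy

variable {α : Type*} {M : Matroid α}

open Classical in
lemma matroidGreedy_append_singleton (l : List α) (e : α) :
    matroidGreedy M (l ++ [e]) =
      if M.Indep (insert e (matroidGreedy M l)) then insert e (matroidGreedy M l)
      else matroidGreedy M l := by
  rw [matroidGreedy, List.foldl_append]
  rfl

lemma indep_matroidGreedy (l : List α) : M.Indep (matroidGreedy M l) := by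
  induction l using List.reverseRecOn with
  | nil => exact M.empty_indep
  | append_singleton l e ih =>
    rw [matroidGreedy_append_singleton]
    split_ifs with h
    exacts [h, ih]

lemma matroidGreedy_subset_append (l₁ l₂ : List α) :
    matroidGreedy M l₁ ⊆ matroidGreedy M (l₁ ++ l₂) := by
  induction l₂ using List.reverseRecOn with
  | nil => simp
  | append_singleton l₂ e ih =>
    rw [← List.append_assoc, matroidGreedy_append_singleton]
    split_ifs
    exacts [ih.trans (subset_insert _ _), ih]

lemma matroidGreedy_append_subset (l₁ l₂ : List α) :
    matroidGreedy M (l₁ ++ l₂) ⊆ matroidGreedy M l₁ ∪ {a | a ∈ l₂} := by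
  induction l₂ using List.reverseRecOn with
  | nil => simp
  | append_singleton l₂ e ih =>
    rw [← List.append_assoc, matroidGreedy_append_singleton]
    have hmono : matroidGreedy M l₁ ∪ {a | a ∈ l₂} ⊆ matroidGreedy M l₁ ∪ {a | a ∈ l₂ ++ [e]} :=
      union_subset_union_right _ fun a ha ↦ List.mem_append_left _ ha
    split_ifs
    · exact insert_subset (Or.inr (by simp)) (ih.trans hmono)
    · exact ih.trans hmono

lemma matroidGreedy_subset (l : List α) : matroidGreedy M l ⊆ {a | a ∈ l} := by
  simpa [matroidGreedy] using matroidGreedy_append_subset (M := M) [] l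

lemma matroidGreedy_append_inter {l₁ l₂ : List α} (h : l₁.Disjoint l₂) :
    matroidGreedy M (l₁ ++ l₂) ∩ {a | a ∈ l₁} = matroidGreedy M l₁ := by
  refine subset_antisymm (fun a ⟨haG, ha₁⟩ ↦ ?_)
    (subset_inter (matroidGreedy_subset_append _ _) (matroidGreedy_subset _))
  exact (matroidGreedy_append_subset l₁ l₂ haG).resolve_right (h ha₁)

lemma mem_matroidGreedy_iff {l₁ l₂ : List α} {e : α} (h : (l₁ ++ e :: l₂).Nodup) :
    e ∈ matroidGreedy M (l₁ ++ e :: l₂) ↔ M.Indep (insert e (matroidGreedy M l₁)) := by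
  have he₁ : e ∉ l₁ := fun he ↦ (List.nodup_append'.1 h).2.2 he List.mem_cons_self
  have hsplit : l₁ ++ e :: l₂ = (l₁ ++ [e]) ++ l₂ := by simp
  rw [hsplit] at h ⊢
  have hprefix : e ∈ matroidGreedy M (l₁ ++ [e] ++ l₂) ↔ e ∈ matroidGreedy M (l₁ ++ [e]) := by
    rw [← matroidGreedy_append_inter (List.nodup_append'.1 h).2.2]
    simp
  rw [hprefix, matroidGreedy_append_singleton]
  split_ifs with hind
  · simpa using hind
  · simpa [hind] using fun he ↦ he₁ (matroidGreedy_subset l₁ he)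

lemma isBase_matroidGreedy {l : List α} (hE : M.E ⊆ {a | a ∈ l}) :
    M.IsBase (matroidGreedy M l) := by
  refine (indep_matroidGreedy l).isBase_of_forall_insert fun e ⟨heE, heG⟩ hins ↦ heG ?_
  obtain ⟨l₁, l₂, rfl⟩ := List.append_of_mem (hE heE)
  have hind : M.Indep (insert e (matroidGreedy M l₁)) :=
    hins.subset (insert_subset_insert (matroidGreedy_subset_append _ _))
  have hmem : e ∈ matroidGreedy M (l₁ ++ [e]) := by
    simp [matroidGreedy_append_singleton, hind]
  simpa using matroidGreedy_subset_append (l₁ ++ [e]) l₂ hmem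

/-- `e` is the first element of `l` on which `y` and the greedy base disagree. -/
lemma Matroid.IsBase.exists_exchange_of_ne_matroidGreedy {l : List α} {y : Set α}
    {R : α → α → Prop} (hy : M.IsBase y) (hnd : l.Nodup) (hE : M.E ⊆ {a | a ∈ l})
    (hR : l.Pairwise R) (hne : y ≠ matroidGreedy M l) :
    ∃ e ∈ matroidGreedy M l \ y, ∃ f ∈ y \ matroidGreedy M l,
      R e f ∧ M.IsBase (insert e (y \ {f})) := by
  classical
  set G := matroidGreedy M l with hGdef
  have hG : M.IsBase G := isBase_matroidGreedy hE
  have hfind : (l.find? (· ∈ symmDiff y G)).isSome := by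
    obtain ⟨a, ha⟩ := symmDiff_nonempty.2 hne
    have haE : a ∈ M.E := ha.elim (fun h ↦ hy.subset_ground h.1) (fun h ↦ hG.subset_ground h.1)
    exact List.find?_isSome.2 ⟨a, hE haE, by simpa using ha⟩
  obtain ⟨e, he⟩ := Option.isSome_iff_exists.1 hfind
  obtain ⟨hediff, l₁, l₂, rfl, hl₁⟩ := List.find?_eq_some_iff_append.1 he
  have hagree : ∀ a ∈ l₁, a ∈ y ↔ a ∈ G := fun a ha ↦ by
    have := hl₁ a ha
    simp only [Bool.not_eq_true', decide_eq_false_iff_not, mem_symmDiff] at this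
    tauto
  have hprefix : y ∩ {a | a ∈ l₁} = matroidGreedy M l₁ := by
    rw [← matroidGreedy_append_inter (List.nodup_append'.1 hnd).2.2, ← hGdef]
    ext a
    simp only [mem_inter_iff, mem_ofPred_eq]
    exact ⟨fun ⟨h, h₁⟩ ↦ ⟨(hagree a h₁).1 h, h₁⟩, fun ⟨h, h₁⟩ ↦ ⟨(hagree a h₁).2 h, h₁⟩⟩
  simp only [decide_eq_true_eq, mem_symmDiff] at hediff
  have heG : e ∈ G := by
    by_contra heG
    have hey : e ∈ y := by tauto
    refine heG ((mem_matroidGreedy_iff hnd).2 (hy.indep.subset ?_))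
    rw [← hprefix]
    exact insert_subset hey inter_subset_left
  have hey : e ∉ y := by tauto
  obtain ⟨f, ⟨hfy, hfG⟩, hbase⟩ := hG.rev_exchange hy ⟨heG, hey⟩
  have hf₂ : f ∈ l₂ := by
    rcases List.mem_append.1 (hE (hy.subset_ground hfy)) with hf₁ | hf
    · exact absurd ((hagree f hf₁).1 hfy) hfG
    · exact (List.mem_cons.1 hf).resolve_left fun hfe ↦ hey (hfe ▸ hfy)
  exact ⟨e, ⟨heG, hey⟩, f, ⟨hfy, hfG⟩,
    List.rel_of_pairwise_cons (List.pairwise_append.1 hR).2.1 hf₂, hbase⟩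

end Greedy

lemma finsum_mem_insert_sdiff_singleton {α β : Type*} [AddCommGroup β] (w : α → β)
    {s : Set α} (hs : s.Finite) {a b : α} (hb : b ∈ s) (ha : a ∉ s) :
    ∑ᶠ i ∈ insert a (s \ {b}), w i = ∑ᶠ i ∈ s, w i - w b + w a := by
  have hsplit : ∑ᶠ i ∈ s, w i = w b + ∑ᶠ i ∈ s \ {b}, w i := by
    rw [← finsum_mem_insert w (a := b) (by simp) hs.sdiff, insert_sdiff_singleton,
      insert_eq_of_mem hb]
  rw [finsum_mem_insert w (fun h ↦ ha h.1) hs.sdiff, hsplit]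
  abel

section Weight

variable {α β : Type*} [AddCommGroup β] [PartialOrder β] [IsOrderedAddMonoid β]
  {M : Matroid α} {w : α → β} {l : List α}

lemma finsum_mem_matroidGreedy_le (hnd : l.Nodup) (hE : M.E ⊆ {a | a ∈ l})
    (hsort : l.Pairwise fun a b ↦ w a ≤ w b) {y : Set α} (hy : M.IsBase y) :
    ∑ᶠ a ∈ matroidGreedy M l, w a ≤ ∑ᶠ a ∈ y, w a := by
  set G := matroidGreedy M l
  induction hn : (y \ G).ncard using Nat.strong_induction_on generalizing y with
  | _ n ih =>
  obtain rfl | hne := eq_or_ne y G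
  · rfl
  have hfin : y.Finite := (List.finite_toSet l).subset (hy.subset_ground.trans hE)
  obtain ⟨e, ⟨heG, hey⟩, f, hfyG, hwef, hy'⟩ :=
    hy.exists_exchange_of_ne_matroidGreedy hnd hE hsort hne
  have hdiff : insert e (y \ {f}) \ G = (y \ G) \ {f} := by
    ext a
    simp only [mem_sdiff, mem_insert_iff, mem_singleton_iff]
    constructor
    · rintro ⟨rfl | ⟨hay, haf⟩, haG⟩
      exacts [absurd heG haG, ⟨⟨hay, haG⟩, haf⟩]
    · rintro ⟨⟨hay, haG⟩, haf⟩
      exact ⟨Or.inr ⟨hay, haf⟩, haG⟩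
  calc ∑ᶠ a ∈ G, w a ≤ ∑ᶠ a ∈ insert e (y \ {f}), w a :=
        ih _ (hn ▸ hdiff ▸ ncard_sdiff_singleton_lt_of_mem hfyG hfin.sdiff) hy' rfl
    _ = ∑ᶠ a ∈ y, w a - (w f - w e) := by
        rw [finsum_mem_insert_sdiff_singleton w hfin hfyG.1 hey]
        abel
    _ ≤ ∑ᶠ a ∈ y, w a := sub_le_self _ (sub_nonneg.2 hwef)

lemma matroidGreedy_eq_of_forall_finsum_le {x : Set α} (hx : M.IsBase x)
    (hmin : ∀ y, M.IsBase y → ∑ᶠ a ∈ x, w a ≤ ∑ᶠ a ∈ y, w a) (hnd : l.Nodup)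
    (hE : M.E ⊆ {a | a ∈ l}) (hsort : l.Pairwise fun a b ↦ b ∈ x → a ∉ x → w a < w b) :
    matroidGreedy M l = x := by
  by_contra hne
  obtain ⟨e, ⟨-, hex⟩, f, ⟨hfx, -⟩, hwef, hx'⟩ :=
    hx.exists_exchange_of_ne_matroidGreedy hnd hE hsort (Ne.symm hne)
  have hfin : x.Finite := (List.finite_toSet l).subset (hx.subset_ground.trans hE)
  refine (hmin _ hx').not_gt ?_
  calc ∑ᶠ a ∈ insert e (x \ {f}), w a = ∑ᶠ a ∈ x, w a - (w f - w e) := by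
        rw [finsum_mem_insert_sdiff_singleton w hfin hfx hex]
        abel
    _ < ∑ᶠ a ∈ x, w a := sub_lt_self _ (sub_pos.2 (hwef hfx hex))

end Weight

lemma exists_nodup_pairwise_le {α β : Type*} [Fintype α] [LinearOrder β] (f : α → β) :
    ∃ l : List α, l.Nodup ∧ (∀ a, a ∈ l) ∧ l.Pairwise fun a b ↦ f a ≤ f b := by
  let l := (Finset.univ : Finset α).toList.mergeSort fun a b ↦ decide (f a ≤ f b)
  have hperm : l.Perm (Finset.univ : Finset α).toList := List.mergeSort_perm _ _
  refine ⟨l, hperm.nodup_iff.2 (Finset.nodup_toList _), fun a ↦ hperm.mem_iff.2 (by simp), ?_⟩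
  simpa using List.pairwise_mergeSort (le := fun a b ↦ decide (f a ≤ f b))
    (fun a b c hab hbc ↦ by simp only [decide_eq_true_eq] at *; exact hab.trans hbc)
    (fun a b ↦ by simpa using le_total (f a) (f b)) (Finset.univ : Finset α).toList

/-- a base `x` of a matroid minimizes a weight function `w` over all bases
iff `x` is the output of the greedy algorithm on some permutation of the ground set
sorting `w` in non-decreasing order. -/
theorem greedy_characterizes_min_weight_base
    {α : Type*} [Fintype α] (M : Matroid α) (w : α → ℝ)
    (x : Set α) (hx : M.IsBase x) :
    (∀ y : Set α, M.IsBase y → (∑ᶠ e ∈ x, w e) ≤ ∑ᶠ e ∈ y, w e) ↔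
      ∃ l : List α, l.Nodup ∧ (∀ a : α, a ∈ l) ∧
        l.Pairwise (fun a b => w a ≤ w b) ∧ matroidGreedy M l = x := by
  constructor
  · intro hmin
    -- Sort by weight, breaking ties in favour of the elements of `x`.
    obtain ⟨l, hnd, hall, hsort⟩ := exists_nodup_pairwise_le fun a ↦ toLex (w a, a ∉ x)
    refine ⟨l, hnd, hall, hsort.imp (Prod.Lex.monotone_fst _ _),
      matroidGreedy_eq_of_forall_finsum_le hx hmin hnd (fun a _ ↦ hall a) (hsort.imp ?_)⟩
    intro a b hab hb ha
    simpa [Prod.Lex.toLex_le_toLex, ha, hb] using hab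
  · rintro ⟨l, hnd, hall, hsort, rfl⟩ y hy
    exact finsum_mem_matroidGreedy_le hnd (fun a _ ↦ hall a) hsort hy
end

section
/- Let w₁, w₂ : E → R be weight functions and for λ ∈ [0,1] let w^{(λ)} = (1−λ)w₁ + λw₂. Fix c ∈ [0,1] and b ∈ [0,1] with c < b, and suppose for all λ ∈ [c, b) and all i ≠ j, w^{(λ)}(i) = w^{(λ)}(j) implies w₁(i) = w₁(j) and w₂(i) = w₂(j). Then any permutation sorting w^{(c)} in non-decreasing order also sorts w^{(b)} in non-decreasing order, except possibly among elements sharing equal w^{(b)} value. -/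
/-! For fixed `i ≤ j`, the gap `w^{(λ)}(τ j) - w^{(λ)}(τ i)` is continuous (indeed affine) in `λ`.
If it were nonnegative at `c` but negative at `b`, it would vanish at some `λ ∈ [c, b)`; there the
separation hypothesis makes `τ i` and `τ j` carry the same weights, so the gap vanishes for every
`λ`, in particular at `b`. -/

theorem sorting_permutation_transfers_general
    (m : ℕ) (w₁ w₂ : Fin m → ℝ)
    (c b : ℝ) (hcb : c < b)
    (hsep : ∀ lam ∈ Set.Ico c b, ∀ i j : Fin m,
      (1 - lam) * w₁ i + lam * w₂ i = (1 - lam) * w₁ j + lam * w₂ j →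
      w₁ i = w₁ j ∧ w₂ i = w₂ j)
    (τ : Equiv.Perm (Fin m))
    (hsort : ∀ i j : Fin m, i ≤ j →
      (1 - c) * w₁ (τ i) + c * w₂ (τ i) ≤ (1 - c) * w₁ (τ j) + c * w₂ (τ j)) :
    ∀ i j : Fin m, i ≤ j →
      (1 - b) * w₁ (τ i) + b * w₂ (τ i) ≤ (1 - b) * w₁ (τ j) + b * w₂ (τ j) := by
  intro i j hij
  by_contra! hdesc
  let gap : ℝ → ℝ := fun lam ↦
    ((1 - lam) * w₁ (τ j) + lam * w₂ (τ j)) - ((1 - lam) * w₁ (τ i) + lam * w₂ (τ i))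
  have hgap : ContinuousOn gap (Set.Icc c b) := by fun_prop
  obtain ⟨lam, hlam, htie⟩ := intermediate_value_Ico' hcb.le hgap
    ⟨sub_neg.mpr hdesc, sub_nonneg.mpr (hsort i j hij)⟩
  obtain ⟨h₁, h₂⟩ := hsep lam hlam (τ j) (τ i) (sub_eq_zero.mp htie)
  rw [h₁, h₂] at hdesc
  exact lt_irrefl _ hdesc

/-- if on the interval `[c, b)` ties in the scalarized weight
`w^{(λ)} = (1−λ)w₁ + λw₂` only occur between elements with identical weight vectors,
then any permutation sorting `w^{(c)}` in non-decreasing order also sorts `w^{(b)}`. -/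
theorem sorting_permutation_transfers
    (m : ℕ) (w₁ w₂ : Fin m → ℝ)
    (c b : ℝ) (hc : 0 ≤ c) (hcb : c < b) (hb : b ≤ 1)
    (hsep : ∀ lam ∈ Set.Ico c b, ∀ i j : Fin m,
      (1 - lam) * w₁ i + lam * w₂ i = (1 - lam) * w₁ j + lam * w₂ j →
      w₁ i = w₁ j ∧ w₂ i = w₂ j)
    (τ : Equiv.Perm (Fin m))
    (hsort : ∀ i j : Fin m, i ≤ j →
      (1 - c) * w₁ (τ i) + c * w₂ (τ i) ≤ (1 - c) * w₁ (τ j) + c * w₂ (τ j)) :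
    ∀ i j : Fin m, i ≤ j →
      (1 - b) * w₁ (τ i) + b * w₂ (τ i) ≤ (1 - b) * w₁ (τ j) + b * w₂ (τ j) :=
  sorting_permutation_transfers_general m w₁ w₂ c b hcb hsep τ hsort
end

section
/- For any base-superset x (r(x) = n) of a matroid M of rank n on m elements with weight w : E → positive integers, and any base z of minimum weight, there exist at most n two-element exchanges (add one element, remove one element) and at most m − n single-element removals on x whose total weight decrease sums to at least w(x) − OPT, where OPT is the minimum base weight. -/
/-!
Extend `z ∩ x` to a base `B ⊆ x`. By Brualdi's bijective basis exchange there is a bijection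
`σ : z \ B ≃ B \ z` such that `B - σ a + a` is a base for every `a`: it comes from Hall's
theorem, because for `A ⊆ z \ B` the independent set `A ∪ (B ∩ z)` lies in the closure of
`(B ∩ z)` together with the fundamental circuits of the elements of `A` in `B`, so these
circuits meet `B \ z` in at least `|A|` elements. The exchanges `(a, σ a)` and the removals of
the elements of `x \ B` then account for exactly `w(x) - w(z)`.
-/

open Set

theorem Set.exists_injective_of_forall_encard_le_encard_biUnion {ι β : Type*} {S : Set ι}
    {t : ι → Set β} (ht : ∀ i ∈ S, (t i).Finite)
    (hall : ∀ A ⊆ S, A.Finite → A.encard ≤ (⋃ i ∈ A, t i).encard) :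
    ∃ f : S → β, Function.Injective f ∧ ∀ i : S, f i ∈ t i := by
  classical
  let t' : S → Finset β := fun i ↦ (ht i i.2).toFinset
  obtain ⟨f, hf, hft⟩ :=
    (Finset.all_card_le_biUnion_card_iff_exists_injective t').1 fun s ↦ by
      have hs := hall (Subtype.val '' (s : Set S)) (by simp) (s.finite_toSet.image _)
      have hunion : (⋃ i ∈ Subtype.val '' (s : Set S), t i) = ↑(s.biUnion t') := by
        ext; simp [t']
      rwa [hunion, Subtype.val_injective.injOn.encard_image, encard_coe_eq_coe_finsetCard,
        encard_coe_eq_coe_finsetCard, Nat.cast_le] at hs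
  exact ⟨f, hf, fun i ↦ (ht i i.2).mem_toFinset.1 (hft i)⟩

namespace Matroid

variable {α : Type*} {M : Matroid α} {B B' : Set α} {a b : α}

lemma IsBase.insert_sdiff_singleton_isBase_of_mem_fundCircuit (hB : M.IsBase B)
    (haE : a ∈ M.E) (haB : a ∉ B) (hbB : b ∈ B) (hb : b ∈ M.fundCircuit a B) :
    M.IsBase (insert a (B \ {b})) := by
  have hab : a ≠ b := by rintro rfl; exact haB hbB
  refine hB.exchange_isBase_of_indep haB ?_
  rw [insert_sdiff_singleton_comm hab]
  exact (hB.indep.mem_fundCircuit_iff (by rwa [hB.closure_eq]) haB).1 hb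

lemma IsBase.mem_closure_fundCircuit_inter_sdiff_union_inter (hB : M.IsBase B)
    (haE : a ∈ M.E) (haB : a ∉ B) (B' : Set α) :
    a ∈ M.closure ((M.fundCircuit a B ∩ (B \ B')) ∪ (B ∩ B')) := by
  have hC := hB.fundCircuit_isCircuit haE haB
  refine M.closure_subset_closure (fun c hc ↦ ?_) (hC.mem_closure_sdiff_singleton_of_mem
    (M.mem_fundCircuit a B))
  have hcB : c ∈ B := (M.fundCircuit_subset_insert a B hc.1).resolve_left hc.2
  by_cases hcB' : c ∈ B'
  · exact .inr ⟨hcB, hcB'⟩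
  · exact .inl ⟨hc.1, hcB, hcB'⟩

lemma IsBase.encard_le_encard_biUnion_fundCircuit [M.RankFinite] (hB : M.IsBase B)
    (hB' : M.IsBase B') {A : Set α} (hA : A ⊆ B' \ B) :
    A.encard ≤ (⋃ a ∈ A, M.fundCircuit a B ∩ (B \ B')).encard := by
  set T := ⋃ a ∈ A, M.fundCircuit a B ∩ (B \ B')
  have hindep : M.Indep (A ∪ (B ∩ B')) :=
    hB'.indep.subset (union_subset (hA.trans sdiff_subset) inter_subset_right)
  have hspan : A ∪ (B ∩ B') ⊆ M.closure (T ∪ (B ∩ B')) := by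
    refine union_subset (fun a ha ↦ ?_) (subset_union_right.trans (M.subset_closure _ ?_))
    · refine M.closure_subset_closure (union_subset_union_left _ ?_)
        (hB.mem_closure_fundCircuit_inter_sdiff_union_inter (hB'.subset_ground (hA ha).1)
          (hA ha).2 B')
      exact subset_biUnion_of_mem (u := fun a ↦ M.fundCircuit a B ∩ (B \ B')) ha
    · refine union_subset (iUnion₂_subset fun _ _ ↦ ?_)
        (inter_subset_left.trans hB.subset_ground)
      exact inter_subset_right.trans (sdiff_subset.trans hB.subset_ground)
  have hle := (hindep.encard_le_eRk_of_subset hspan).trans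
    ((M.eRk_closure_eq _).trans_le (M.eRk_le_encard _))
  have hTdisj : Disjoint T (B ∩ B') :=
    disjoint_left.2 fun _ he he' ↦ by
      obtain ⟨_, _, -, -, hnot⟩ := mem_iUnion₂.1 he
      exact hnot he'.2
  have hAdisj : Disjoint A (B ∩ B') := disjoint_left.2 fun _ he he' ↦ (hA he).2 he'.1
  rwa [encard_union_eq hAdisj, encard_union_eq hTdisj,
    ENat.add_le_add_iff_right (hB.finite.inter_of_left B').encard_lt_top.ne] at hle

lemma IsBase.exists_sdiff_equiv_sdiff_forall_insert_isBase [M.RankFinite] (hB : M.IsBase B)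
    (hB' : M.IsBase B') :
    ∃ e : ↥(B' \ B) ≃ ↥(B \ B'),
      ∀ a : ↥(B' \ B), M.IsBase (insert (a : α) (B \ {(e a : α)})) := by
  obtain ⟨f, hf, hft⟩ := exists_injective_of_forall_encard_le_encard_biUnion
    (S := B' \ B) (t := fun a ↦ M.fundCircuit a B ∩ (B \ B'))
    (fun _ _ ↦ hB.finite.sdiff.inter_of_right _)
    (fun _ hA _ ↦ hB.encard_le_encard_biUnion_fundCircuit hB' hA)
  have : Finite ↥(B \ B') := hB.finite.sdiff.to_subtype
  let g : ↥(B' \ B) → ↥(B \ B') := fun a ↦ ⟨f a, (hft a).2⟩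
  have hg : Function.Bijective g :=
    Function.Injective.bijective_of_nat_card_le (fun _ _ h ↦ hf (congrArg Subtype.val h))
      (by rw [Nat.card_coe_set_eq, Nat.card_coe_set_eq, hB.ncard_sdiff_comm hB'])
  exact ⟨.ofBijective g hg, fun a ↦ hB.insert_sdiff_singleton_isBase_of_mem_fundCircuit
    (hB'.subset_ground a.2.1) a.2.2 (hft a).2.1 (hft a).1⟩

end Matroid

theorem finsum_mem_sub_finsum_mem_eq_finsum_mem_sdiff_add {α G : Type*} [AddCommGroup G]
    (w : α → G) {x B z : Set α} (hx : x.Finite) (hz : z.Finite) (hBx : B ⊆ x) :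
    ∑ᶠ e ∈ x, w e - ∑ᶠ e ∈ z, w e =
      ∑ᶠ e ∈ x \ B, w e + (∑ᶠ e ∈ B \ z, w e - ∑ᶠ e ∈ z \ B, w e) := by
  rw [← finsum_mem_add_sdiff hBx hx, ← finsum_mem_inter_add_sdiff z (hx.subset hBx),
    ← finsum_mem_inter_add_sdiff B hz, inter_comm z B]
  abel

theorem drift_exchanges_exist_general
    {α : Type*} [Fintype α] (M : Matroid α) (w : α → ℤ)
    (m n : ℕ) (hm : m = Fintype.card α)
    (x : Set α) (hspan : ∃ B : Set α, M.IsBase B ∧ B ⊆ x)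
    (z : Set α) (hz : M.IsBase z) (hzn : z.ncard = n) :
    ∃ (X : Finset (α × α)) (Y : Finset α),
      X.card ≤ n ∧ Y.card ≤ m - n ∧
      (∀ p ∈ X, p.1 ∉ x ∧ p.2 ∈ x ∧
        ∃ B : Set α, M.IsBase B ∧ B ⊆ insert p.1 x \ {p.2}) ∧
      (∀ e ∈ Y, e ∈ x ∧ ∃ B : Set α, M.IsBase B ∧ B ⊆ x \ {e}) ∧
      (∑ᶠ e ∈ x, w e) - (∑ᶠ e ∈ z, w e) ≤
        (∑ p ∈ X, (w p.2 - w p.1)) + ∑ e ∈ Y, w e := by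
  classical
  obtain ⟨B₀, hB₀, hB₀x⟩ := hspan
  have hxE_spanning : M.Spanning (x ∩ M.E) :=
    hB₀.spanning.superset (subset_inter hB₀x hB₀.subset_ground)
  obtain ⟨B, hB, hzxB, hBxE⟩ :=
    (hz.indep.subset inter_subset_left).exists_isBase_subset_spanning hxE_spanning
      (fun e he ↦ ⟨he.2, hz.subset_ground he.1⟩)
  have hBx : B ⊆ x := hBxE.trans inter_subset_left
  obtain ⟨σ, hσ⟩ := hB.exists_sdiff_equiv_sdiff_forall_insert_isBase hz
  let exchanges : ↥(z \ B) ↪ α × α :=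
    ⟨fun a ↦ (a, σ a), fun _ _ h ↦ Subtype.ext (congrArg Prod.fst h)⟩
  have hpairs : ∑ p ∈ Finset.univ.map exchanges, (w p.2 - w p.1) =
      ∑ᶠ b ∈ B \ z, w b - ∑ᶠ a ∈ z \ B, w a := by
    rw [Finset.sum_map, ← finsum_set_coe_eq_finsum_mem, ← finsum_set_coe_eq_finsum_mem,
      finsum_eq_sum_of_fintype, finsum_eq_sum_of_fintype, ← σ.sum_comp,
      ← Finset.sum_sub_distrib]
    rfl
  refine ⟨Finset.univ.map exchanges, (x \ B).toFinset, ?_, ?_, ?_, ?_, ?_⟩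
  · rw [Finset.card_map, Finset.card_univ, ← Nat.card_eq_fintype_card, Nat.card_coe_set_eq,
      ← hzn]
    exact ncard_le_ncard sdiff_subset
  · rw [← ncard_eq_toFinset_card', ncard_sdiff hBx, hB.ncard_eq_ncard_of_isBase hz, hzn, hm,
      ← Nat.card_eq_fintype_card]
    exact Nat.sub_le_sub_right (ncard_le_card x) n
  · simp only [Finset.mem_map, Finset.mem_univ, true_and]
    rintro _ ⟨a, rfl⟩
    have hne : (a : α) ≠ σ a := fun h ↦ a.2.2 (h ▸ (σ a).2.1)
    refine ⟨fun hax ↦ a.2.2 (hzxB ⟨a.2.1, hax⟩), hBx (σ a).2.1, _, hσ a, ?_⟩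
    rw [insert_sdiff_singleton_comm hne]
    exact sdiff_subset_sdiff_left (insert_subset_insert hBx)
  · intro e he
    rw [mem_toFinset] at he
    exact ⟨he.1, B, hB, subset_sdiff_singleton hBx he.2⟩
  · refine le_of_eq ?_
    rw [hpairs, ← finsum_mem_eq_toFinset_sum, add_comm,
      finsum_mem_sub_finsum_mem_eq_finsum_mem_sdiff_add w x.toFinite z.toFinite hBx]

/-- for any superset `x` of a base (a spanning set) of a rank-`n` matroid on
`m` elements with positive integer weights, and a minimum-weight base `z`, there are at
most `n` two-element exchanges (add `a ∉ x`, remove `b ∈ x`) and at most `m − n`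
single-element removals, all keeping the set spanning, whose weight decreases sum to at
least `w(x) − OPT`. -/
theorem drift_exchanges_exist
    {α : Type*} [Fintype α] [DecidableEq α] (M : Matroid α) (w : α → ℤ)
    (hw : ∀ e, 0 < w e)
    (m n : ℕ) (hm : m = Fintype.card α)
    (x : Set α) (hxE : x ⊆ M.E) (hspan : ∃ B : Set α, M.IsBase B ∧ B ⊆ x)
    (z : Set α) (hz : M.IsBase z) (hzn : z.ncard = n)
    (hzmin : ∀ b : Set α, M.IsBase b → (∑ᶠ e ∈ z, w e) ≤ ∑ᶠ e ∈ b, w e) :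
    ∃ (X : Finset (α × α)) (Y : Finset α),
      X.card ≤ n ∧ Y.card ≤ m - n ∧
      (∀ p ∈ X, p.1 ∉ x ∧ p.2 ∈ x ∧
        ∃ B : Set α, M.IsBase B ∧ B ⊆ insert p.1 x \ {p.2}) ∧
      (∀ e ∈ Y, e ∈ x ∧ ∃ B : Set α, M.IsBase B ∧ B ⊆ x \ {e}) ∧
      (∑ᶠ e ∈ x, w e) - (∑ᶠ e ∈ z, w e) ≤
        (∑ p ∈ X, (w p.2 - w p.1)) + ∑ e ∈ Y, w e :=
  drift_exchanges_exist_general M w m n hm x hspan z hz hzn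
end
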